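/- arXiv:2308.04257 — 8 statements merged into one kernel-verified Lean document; each statement's English description precedes it below -/
import Mathlib

section
/- Let γ ∈ (0,1) and C > 0. Let u : ℝ² → ℝ be a smooth function, 2π-periodic in its first variable x, harmonic on ℝ² (i.e. ∂²u/∂x² + ∂²u/∂s² = 0 everywhere), and satisfying |u(x,s)| ≤ C·cosh(s)^{1+γ} for all (x,s). Then there exist real constants a, b, c, d, p, q such that u(x,s) = a + b·s + c·eˢ·cos(x) + d·e^{−s}·cos(x) + p·eˢ·sin(x) + q·e^{−s}·sin(x). -/
open Complex

/-- first-order ODE: g' = c g implies g s = exp(c s) * g 0. -/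
lemma ode1 (c : ℂ) (g : ℝ → ℂ) (hg : ∀ s, HasDerivAt g (c * g s) s) :
    ∀ s, g s = Complex.exp (c * s) * g 0 := by
  intro s
  have key : ∀ t : ℝ, Complex.exp (-(c * t)) * g t = Complex.exp (-(c * 0)) * g 0 := by
    have hd : ∀ t : ℝ, HasDerivAt (fun t : ℝ => Complex.exp (-(c * t)) * g t) 0 t := by
      intro t
      have h1 : HasDerivAt (fun t : ℝ => Complex.exp (-(c * t)))
          (-c * Complex.exp (-(c * t))) t := by
        have : HasDerivAt (fun t : ℝ => -(c * (t : ℂ))) (-c) t := by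
          simpa [Pi.neg_def] using (((hasDerivAt_id t).ofReal_comp).const_mul c).neg
        simpa [mul_comm] using this.cexp
      have := h1.mul (hg t)
      convert this using 1
      · rfl
      · rfl
      ring
    intro t
    exact is_const_of_deriv_eq_zero (fun t => (hd t).differentiableAt)
      (fun t => (hd t).deriv) t 0
  have h := key s
  have h2 : Complex.exp (c * s) * (Complex.exp (-(c * s)) * g s)
      = Complex.exp (c * s) * (Complex.exp (-(c * 0)) * g 0) := by rw [h]
  rw [← mul_assoc, ← Complex.exp_add] at h2
  simpa using h2

/-- second-order ODE f'' = k² f: representation. -/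
lemma ode2 (k : ℝ) (hk : k ≠ 0) (f f' : ℝ → ℂ)
    (hf : ∀ s, HasDerivAt f (f' s) s)
    (hf' : ∀ s, HasDerivAt f' (((k : ℂ))^2 * f s) s) :
    ∃ A B : ℂ, ∀ s, f s = A * Complex.exp ((k : ℂ) * s) + B * Complex.exp (-((k : ℂ) * s)) := by
  set g : ℝ → ℂ := fun s => f' s + (k : ℂ) * f s with hgdef
  have hg : ∀ s, HasDerivAt g ((k : ℂ) * g s) s := by
    intro s
    have := (hf' s).add ((hf s).const_mul (k : ℂ))
    convert this using 1
    · rfl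
    · rfl
    simp [hgdef]; ring
  have hgs := ode1 (k : ℂ) g hg
  set A : ℂ := g 0 / (2 * k) with hA
  set w : ℝ → ℂ := fun s => f s - A * Complex.exp ((k : ℂ) * s) with hw
  have hwd : ∀ s, HasDerivAt w (-(k:ℂ) * w s) s := by
    intro s
    have hexp : HasDerivAt (fun s : ℝ => A * Complex.exp ((k : ℂ) * s))
        (A * ((k:ℂ) * Complex.exp ((k : ℂ) * s))) s := by
      have hin : HasDerivAt (fun s : ℝ => (k : ℂ) * (s : ℂ)) (k : ℂ) s := by
        simpa using ((hasDerivAt_id s).ofReal_comp).const_mul (k : ℂ)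
      simpa [mul_comm] using (hin.cexp).const_mul A
    have := (hf s).sub hexp
    convert this using 1
    · rfl
    · rfl
    have hfs : f' s = g s - (k:ℂ) * f s := by simp [hgdef]
    rw [hfs, hgs s, hw, hA]
    have h2k : (2 : ℂ) * k ≠ 0 := by
      simp [Complex.ofReal_ne_zero.mpr hk]
    have hk' : (k:ℂ) ≠ 0 := Complex.ofReal_ne_zero.mpr hk
    field_simp
    ring
  have hws := ode1 (-(k:ℂ)) w hwd
  refine ⟨A, w 0, fun s => ?_⟩
  have := hws s
  rw [hw] at this
  have : f s = Complex.exp (-(k:ℂ) * s) * w 0 + A * Complex.exp ((k:ℂ) * s) := by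
    rw [← this]; ring
  rw [this]; ring_nf

open Filter Topology in
lemma killA (k c M : ℝ) (hck : c < k) (hc : 0 ≤ c) (A B : ℂ)
    (h : ∀ s : ℝ, 0 ≤ s →
      ‖A * Complex.exp ((k:ℂ)*s) + B * Complex.exp (-((k:ℂ)*s))‖ ≤ M * Real.exp (c*s)) :
    A = 0 := by
  have hk : 0 < k := lt_of_le_of_lt hc hck
  set F : ℝ → ℂ := fun s => Complex.exp (-((k:ℂ)*s)) *
      (A * Complex.exp ((k:ℂ)*s) + B * Complex.exp (-((k:ℂ)*s))) with hF
  have h1 : Tendsto F atTop (𝓝 0) := by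
    rw [tendsto_zero_iff_norm_tendsto_zero]
    have hsq : ∀ᶠ s : ℝ in atTop, ‖F s‖ ≤ M * Real.exp ((c - k) * s) := by
      filter_upwards [eventually_ge_atTop (0:ℝ)] with s hs
      have : ‖F s‖ = Real.exp (-(k*s)) * ‖A * Complex.exp ((k:ℂ)*s) + B * Complex.exp (-((k:ℂ)*s))‖ := by
        rw [hF]; simp [map_mul, Complex.norm_exp]
      rw [this]
      calc Real.exp (-(k*s)) * ‖_‖ ≤ Real.exp (-(k*s)) * (M * Real.exp (c*s)) := by
            exact mul_le_mul_of_nonneg_left (h s hs) (Real.exp_nonneg _)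
        _ = M * Real.exp ((c - k) * s) := by
            rw [mul_left_comm, ← Real.exp_add]; ring_nf
    have hlim : Tendsto (fun s : ℝ => M * Real.exp ((c - k) * s)) atTop (𝓝 0) := by
      rw [show (0:ℝ) = M * 0 by ring]
      exact (Real.tendsto_exp_atBot.comp
        ((tendsto_const_mul_atBot_of_neg (by linarith : c - k < 0)).mpr tendsto_id)).const_mul M
    exact squeeze_zero' (Eventually.of_forall fun s => norm_nonneg _) hsq hlim
  have h2 : F = fun s : ℝ => A + B * Complex.exp (-(2*(k:ℂ)*s)) := by
    funext s
    rw [hF]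
    have e1 : Complex.exp (-((k:ℂ)*s)) * Complex.exp ((k:ℂ)*s) = 1 := by
      rw [← Complex.exp_add]; simp
    have e2 : Complex.exp (-((k:ℂ)*s)) * Complex.exp (-((k:ℂ)*s)) = Complex.exp (-(2*(k:ℂ)*s)) := by
      rw [← Complex.exp_add]; ring_nf
    linear_combination A * e1 + B * e2
  have h3 : Tendsto F atTop (𝓝 (A + B * 0)) := by
    rw [h2]
    refine tendsto_const_nhds.add (Tendsto.const_mul B ?_)
    rw [tendsto_zero_iff_norm_tendsto_zero]
    have : ∀ s : ℝ, ‖Complex.exp (-(2*(k:ℂ)*s))‖ = Real.exp ((-(2*k)) * s) := by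
      intro s
      rw [Complex.norm_exp]
      congr 1
      simp
    simp_rw [this]
    exact Real.tendsto_exp_atBot.comp
      ((tendsto_const_mul_atBot_of_neg (by linarith : -(2*k) < 0)).mpr tendsto_id)
  have := tendsto_nhds_unique h3 h1
  simpa using this

open intervalIntegral in
lemma paramDeriv (a b : ℝ) (V V' : ℝ × ℝ → ℂ) (hV : Continuous V) (hV' : Continuous V')
    (hd : ∀ x s : ℝ, HasDerivAt (fun t => V (x, t)) (V' (x, s)) s) (s₀ : ℝ) :
    HasDerivAt (fun s => ∫ x in a..b, V (x, s)) (∫ x in a..b, V' (x, s₀)) s₀ := by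
  obtain ⟨K, hK⟩ := (((isCompact_uIcc (a := a) (b := b)).prod
      (isCompact_closedBall s₀ 1)).exists_bound_of_continuousOn hV'.continuousOn)
  have main := intervalIntegral.hasDerivAt_integral_of_dominated_loc_of_deriv_le
    (F := fun s x => V (x, s)) (F' := fun s x => V' (x, s)) (x₀ := s₀)
    (a := a) (b := b) (μ := MeasureTheory.volume) (bound := fun _ => K)
    (s := Metric.ball s₀ 1) (Metric.ball_mem_nhds s₀ one_pos)
    (Filter.Eventually.of_forall fun s =>
      ((hV.comp (continuous_id.prodMk continuous_const)).aestronglyMeasurable).restrict)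
    ((hV.comp (continuous_id.prodMk continuous_const)).intervalIntegrable a b)
    ((hV'.comp (continuous_id.prodMk continuous_const)).aestronglyMeasurable).restrict
    (Filter.Eventually.of_forall fun t ht x hx =>
      hK (t, x) ⟨Set.uIoc_subset_uIcc ht, Metric.ball_subset_closedBall hx⟩)
    (intervalIntegrable_const)
    (Filter.Eventually.of_forall fun t _ x _ => hd t x)
  exact main.2

open Real in
lemma zero_of_fourierCoeff_zero {T : ℝ} [hT : Fact (0 < T)] (f : C(AddCircle T, ℂ))
    (h : ∀ n : ℤ, fourierCoeff (⇑f) n = 0) : ∀ x, f x = 0 := by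
  have hsum : Summable (fourierCoeff (⇑f)) := by
    have : fourierCoeff (⇑f) = fun _ => (0:ℂ) := funext h
    rw [this]; exact summable_zero
  have := hasSum_fourier_series_of_summable hsum
  have h0 : HasSum (fun i : ℤ => fourierCoeff (⇑f) i • fourier i) (0 : C(AddCircle T, ℂ)) := by
    have : (fun i : ℤ => fourierCoeff (⇑f) i • fourier i) = fun _ => (0 : C(AddCircle T, ℂ)) := by
      funext i; rw [h i]; simp
    rw [this]; exact hasSum_zero
  have hf0 : f = 0 := (hasSum_fourier_series_of_summable hsum).unique h0
  intro x; rw [hf0]; rfl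

lemma eI_hasDeriv (m : ℤ) (x : ℝ) :
    HasDerivAt (fun x : ℝ => Complex.exp ((m:ℂ)*Complex.I*x))
      ((m:ℂ)*Complex.I * Complex.exp ((m:ℂ)*Complex.I*x)) x := by
  have hin : HasDerivAt (fun x : ℝ => (m:ℂ)*Complex.I*(x:ℂ)) ((m:ℂ)*Complex.I) x := by
    simpa using ((hasDerivAt_id x).ofReal_comp).const_mul ((m:ℂ)*Complex.I)
  simpa [mul_comm] using hin.cexp

lemma eI_2pi (m : ℤ) : Complex.exp ((m:ℂ)*Complex.I*((2*Real.pi:ℝ):ℂ)) = 1 := by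
  rw [show (m:ℂ)*Complex.I*((2*Real.pi:ℝ):ℂ) = m * (2*Real.pi*Complex.I) by push_cast; ring]
  exact Complex.exp_int_mul_two_pi_mul_I m

lemma eI_norm (m : ℤ) (x : ℝ) : ‖Complex.exp ((m:ℂ)*Complex.I*x)‖ = 1 := by
  rw [Complex.norm_exp]
  simp

lemma orth (n m : ℤ) :
    (∫ x in (0:ℝ)..(2*Real.pi),
      Complex.exp (((-n : ℤ):ℂ)*Complex.I*x) * Complex.exp ((m:ℂ)*Complex.I*x))
    = if m = n then (2*Real.pi:ℂ) else 0 := by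
  have hcomb : ∀ x : ℝ, Complex.exp (((-n : ℤ):ℂ)*Complex.I*x) * Complex.exp ((m:ℂ)*Complex.I*x)
      = Complex.exp ((((m - n : ℤ)):ℂ)*Complex.I*x) := by
    intro x; rw [← Complex.exp_add]; push_cast; ring_nf
  simp_rw [hcomb]
  by_cases h : m = n
  · subst h
    simp only [sub_self, Int.cast_zero, zero_mul, Complex.exp_zero]
    rw [intervalIntegral.integral_const]
    simp
  · have hc : (((m - n : ℤ)):ℂ)*Complex.I ≠ 0 := by
      apply mul_ne_zero _ Complex.I_ne_zero
      exact_mod_cast sub_ne_zero.mpr h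
    have hrw : ∀ x : ℝ, (((m - n : ℤ)):ℂ)*Complex.I*(x:ℂ)
        = ((((m - n : ℤ)):ℂ)*Complex.I) * (x:ℂ) := fun x => by ring
    rw [if_neg h]
    calc (∫ x in (0:ℝ)..(2*Real.pi), Complex.exp ((((m - n : ℤ)):ℂ)*Complex.I*x))
        = (Complex.exp ((((m - n : ℤ)):ℂ)*Complex.I*((2*Real.pi:ℝ):ℂ))
          - Complex.exp ((((m - n : ℤ)):ℂ)*Complex.I*((0:ℝ):ℂ))) / ((((m - n : ℤ)):ℂ)*Complex.I) := by
          exact integral_exp_mul_complex hc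
      _ = 0 := by
          rw [eI_2pi (m - n)]
          norm_num

lemma cosh_rpow_le (γ s : ℝ) (h0 : 0 ≤ 1 + γ) :
    Real.cosh s ^ (1+γ) ≤ Real.exp ((1+γ)*|s|) := by
  have h1 : Real.cosh s ≤ Real.exp |s| := by
    rw [Real.cosh_eq]
    have h2 := Real.exp_le_exp.mpr (le_abs_self s)
    have h3 := Real.exp_le_exp.mpr (neg_le_abs s)
    linarith
  calc Real.cosh s ^ (1+γ) ≤ (Real.exp |s|) ^ (1+γ) :=
        Real.rpow_le_rpow (Real.cosh_pos s).le h1 h0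
    _ = Real.exp ((1+γ)*|s|) := by rw [← Real.exp_mul, mul_comm]


/-- A smooth `2π`-periodic harmonic function on the cylinder with
growth at most `C cosh(s)^(1+γ)`, `γ ∈ (0,1)`, lies in the span of
`1, s, e^s cos x, e^{-s} cos x, e^s sin x, e^{-s} sin x`. -/
theorem harmonic_cylinder_classification
    (γ C : ℝ) (hγ : γ ∈ Set.Ioo (0 : ℝ) 1) (hC : 0 < C)
    (u : ℝ → ℝ → ℝ)
    (hsmooth : ContDiff ℝ (⊤ : ℕ∞) (fun p : ℝ × ℝ => u p.1 p.2))
    (hper : ∀ x s : ℝ, u (x + 2 * Real.pi) s = u x s)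
    (hharm : ∀ x s : ℝ,
      iteratedDeriv 2 (fun x' => u x' s) x
        + iteratedDeriv 2 (fun s' => u x s') s = 0)
    (hbound : ∀ x s : ℝ, |u x s| ≤ C * Real.cosh s ^ (1 + γ)) :
    ∃ a b c d p q : ℝ, ∀ x s : ℝ,
      u x s = a + b * s
        + c * Real.exp s * Real.cos x + d * Real.exp (-s) * Real.cos x
        + p * Real.exp s * Real.sin x + q * Real.exp (-s) * Real.sin x := by
  obtain ⟨hγ0, hγ1⟩ := hγ
  have hπ : (0:ℝ) < Real.pi := Real.pi_pos
  haveI hfact : Fact (0 < 2*Real.pi) := ⟨by positivity⟩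
  set U : ℝ×ℝ → ℝ := fun p => u p.1 p.2 with hUdef
  have hU : ContDiff ℝ (⊤ : ℕ∞) U := hsmooth
  set Ux : ℝ×ℝ → ℝ := fun p => fderiv ℝ U p (1,0) with hUxdef
  set Us : ℝ×ℝ → ℝ := fun p => fderiv ℝ U p (0,1) with hUsdef
  set Uxx : ℝ×ℝ → ℝ := fun p => fderiv ℝ Ux p (1,0) with hUxxdef
  set Uss : ℝ×ℝ → ℝ := fun p => fderiv ℝ Us p (0,1) with hUssdef
  have hfdV : ∀ (V : ℝ×ℝ→ℝ) (v : ℝ×ℝ), ContDiff ℝ (⊤ : ℕ∞) V →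
      ContDiff ℝ (⊤ : ℕ∞) (fun p => fderiv ℝ V p v) := fun V v hV =>
    (hV.fderiv_right (by simp)).clm_apply contDiff_const
  have hUx' : ContDiff ℝ (⊤ : ℕ∞) Ux := hfdV U (1,0) hU
  have hUs' : ContDiff ℝ (⊤ : ℕ∞) Us := hfdV U (0,1) hU
  have hUxx' : ContDiff ℝ (⊤ : ℕ∞) Uxx := hfdV Ux (1,0) hUx'
  have hUss' : ContDiff ℝ (⊤ : ℕ∞) Uss := hfdV Us (0,1) hUs'
  have hlinex : ∀ (V : ℝ×ℝ→ℝ), ContDiff ℝ (⊤ : ℕ∞) V → ∀ x s : ℝ,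
      HasDerivAt (fun x' => V (x', s)) (fderiv ℝ V (x,s) (1,0)) x := by
    intro V hV x s
    have h1 : HasDerivAt (fun x' : ℝ => ((x' : ℝ), s)) ((1:ℝ),(0:ℝ)) x :=
      (hasDerivAt_id x).prodMk (hasDerivAt_const x s)
    exact ((hV.differentiable (by simp) (x,s)).hasFDerivAt).comp_hasDerivAt x h1
  have hlines : ∀ (V : ℝ×ℝ→ℝ), ContDiff ℝ (⊤ : ℕ∞) V → ∀ x s : ℝ,
      HasDerivAt (fun t => V (x, t)) (fderiv ℝ V (x,s) (0,1)) s := by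
    intro V hV x s
    have h1 : HasDerivAt (fun t : ℝ => (x, t)) ((0:ℝ),(1:ℝ)) s :=
      (hasDerivAt_const s x).prodMk (hasDerivAt_id s)
    exact ((hV.differentiable (by simp) (x,s)).hasFDerivAt).comp_hasDerivAt s h1
  have hPDE : ∀ x s : ℝ, Uxx (x,s) + Uss (x,s) = 0 := by
    intro x s
    have e1 : iteratedDeriv 2 (fun x' => u x' s) x = Uxx (x,s) := by
      have hD : deriv (fun x' => u x' s) = fun x' => Ux (x', s) := by
        funext x'; exact (hlinex U hU x' s).deriv
      rw [iteratedDeriv_succ, iteratedDeriv_one, hD]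
      exact (hlinex Ux hUx' x s).deriv
    have e2 : iteratedDeriv 2 (fun s' => u x s') s = Uss (x,s) := by
      have hD : deriv (fun s' => u x s') = fun s' => Us (x, s') := by
        funext s'; exact (hlines U hU x s').deriv
      rw [iteratedDeriv_succ, iteratedDeriv_one, hD]
      exact (hlines Us hUs' x s).deriv
    have := hharm x s
    rw [e1, e2] at this
    exact this
  have hperU : ∀ p : ℝ×ℝ, U (p + (2*Real.pi, 0)) = U p := by
    rintro ⟨x, s⟩
    show u (x + 2*Real.pi) (s + 0) = u x s
    rw [add_zero]; exact hper x s
  have hperV : ∀ (V : ℝ×ℝ→ℝ), ContDiff ℝ (⊤ : ℕ∞) V → (∀ p : ℝ×ℝ, V (p + (2*Real.pi, 0)) = V p) →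
      ∀ (p : ℝ×ℝ) (v : ℝ×ℝ), fderiv ℝ V (p + (2*Real.pi,0)) v = fderiv ℝ V p v := by
    intro V hV hp p v
    have h1 : HasFDerivAt (fun q : ℝ×ℝ => V (q + (2*Real.pi,0)))
        ((fderiv ℝ V (p + (2*Real.pi,0))).comp (ContinuousLinearMap.id ℝ (ℝ×ℝ))) p :=
      ((hV.differentiable (by simp) _).hasFDerivAt).comp p ((hasFDerivAt_id p).add_const _)
    have h2 : (fun q : ℝ×ℝ => V (q + (2*Real.pi,0))) = V := funext hp
    rw [h2] at h1
    have h3 := h1.fderiv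
    rw [h3]; simp
  have hperUx : ∀ p : ℝ×ℝ, Ux (p + (2*Real.pi,0)) = Ux p :=
    fun p => hperV U hU hperU p (1,0)
  -- Fourier-type coefficients
  set E : ℤ → ℝ → ℂ := fun m x => Complex.exp ((m:ℂ)*Complex.I*(x:ℝ)) with hEdef
  set c : ℤ → ℝ → ℂ := fun n s => ∫ x in (0:ℝ)..(2*Real.pi), E (-n) x * (U (x, s) : ℂ)
    with hcdef
  set c' : ℤ → ℝ → ℂ := fun n s => ∫ x in (0:ℝ)..(2*Real.pi), E (-n) x * (Us (x, s) : ℂ)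
    with hc'def
  have hEcont : ∀ m : ℤ, Continuous (E m) := by
    intro m
    exact Complex.continuous_exp.comp (continuous_const.mul Complex.continuous_ofReal)
  have hVcont : ∀ (V : ℝ×ℝ→ℝ), Continuous V → ∀ m : ℤ,
      Continuous (fun p : ℝ×ℝ => E m p.1 * (V p : ℂ)) := by
    intro V hV m
    exact ((hEcont m).comp continuous_fst).mul (Complex.continuous_ofReal.comp hV)
  have hc1 : ∀ (n : ℤ) (s₀ : ℝ), HasDerivAt (c n) (c' n s₀) s₀ := by
    intro n s₀
    exact paramDeriv 0 (2*Real.pi) (fun p => E (-n) p.1 * (U p : ℂ))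
      (fun p => E (-n) p.1 * (Us p : ℂ)) (hVcont U hU.continuous (-n))
      (hVcont Us hUs'.continuous (-n))
      (fun x s => by simpa using ((hlines U hU x s).ofReal_comp).const_mul (E (-n) x)) s₀
  have hc2 : ∀ (n : ℤ) (s₀ : ℝ), HasDerivAt (c' n)
      (∫ x in (0:ℝ)..(2*Real.pi), E (-n) x * (Uss (x, s₀) : ℂ)) s₀ := by
    intro n s₀
    exact paramDeriv 0 (2*Real.pi) (fun p => E (-n) p.1 * (Us p : ℂ))
      (fun p => E (-n) p.1 * (Uss p : ℂ)) (hVcont Us hUs'.continuous (-n))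
      (hVcont Uss hUss'.continuous (-n))
      (fun x s => by simpa using ((hlines Us hUs' x s).ofReal_comp).const_mul (E (-n) x)) s₀
  have hint : ∀ (V : ℝ×ℝ→ℝ), Continuous V → ∀ (m : ℤ) (s : ℝ),
      IntervalIntegrable (fun x => E m x * (V (x,s) : ℂ)) MeasureTheory.volume 0 (2*Real.pi) := by
    intro V hV m s
    exact (((hEcont m).mul (Complex.continuous_ofReal.comp
      (hV.comp (continuous_id.prodMk continuous_const))))).intervalIntegrable 0 (2*Real.pi)
  have hintV : ∀ (V : ℝ×ℝ→ℝ), Continuous V → ∀ s : ℝ,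
      IntervalIntegrable (fun x => (V (x,s) : ℂ)) MeasureTheory.volume 0 (2*Real.pi) := by
    intro V hV s
    exact (Complex.continuous_ofReal.comp
      (hV.comp (continuous_id.prodMk continuous_const))).intervalIntegrable 0 (2*Real.pi)
  have hintE : ∀ (m : ℤ) (c0 : ℂ),
      IntervalIntegrable (fun x => c0 * E m x) MeasureTheory.volume 0 (2*Real.pi) :=
    fun m c0 => (continuous_const.mul (hEcont m)).intervalIntegrable 0 (2*Real.pi)
  have hE2pi : ∀ m : ℤ, E m (2*Real.pi) = 1 := fun m => eI_2pi m
  have hE0 : ∀ m : ℤ, E m 0 = 1 := by intro m; rw [hEdef]; simp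
  have hIBP : ∀ (n : ℤ) (s : ℝ),
      (∫ x in (0:ℝ)..(2*Real.pi), E (-n) x * (Uxx (x,s) : ℂ)) = -((n:ℂ))^2 * c n s := by
    intro n s
    have hUxper : Ux (2*Real.pi, s) = Ux (0, s) := by
      have := hperUx (0, s)
      rw [show ((0:ℝ), s) + (2*Real.pi, (0:ℝ)) = (2*Real.pi, s) by
        rw [Prod.mk_add_mk]; norm_num] at this
      exact this
    have hUper : U (2*Real.pi, s) = U (0, s) := by
      have := hperU (0, s)
      rw [show ((0:ℝ), s) + (2*Real.pi, (0:ℝ)) = (2*Real.pi, s) by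
        rw [Prod.mk_add_mk]; norm_num] at this
      exact this
    have ibp1 := intervalIntegral.integral_mul_deriv_eq_deriv_mul
      (u := E (-n)) (u' := fun x => ((-n:ℤ):ℂ)*Complex.I * E (-n) x)
      (v := fun x => (Ux (x,s) : ℂ)) (v' := fun x => (Uxx (x,s) : ℂ))
      (a := 0) (b := 2*Real.pi)
      (fun x _ => by simpa [hEdef] using eI_hasDeriv (-n) x)
      (fun x _ => by simpa using (hlinex Ux hUx' x s).ofReal_comp)
      (hintE (-n) (((-n:ℤ):ℂ)*Complex.I))
      (hintV Uxx hUxx'.continuous s)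
    have ibp2 := intervalIntegral.integral_mul_deriv_eq_deriv_mul
      (u := fun x => ((-n:ℤ):ℂ)*Complex.I * E (-n) x)
      (u' := fun x => (((-n:ℤ):ℂ)*Complex.I)^2 * E (-n) x)
      (v := fun x => (U (x,s) : ℂ)) (v' := fun x => (Ux (x,s) : ℂ))
      (a := 0) (b := 2*Real.pi)
      (fun x _ => by
        have := (eI_hasDeriv (-n) x).const_mul (((-n:ℤ):ℂ)*Complex.I)
        rw [show (((-n:ℤ):ℂ)*Complex.I) * (((-n:ℤ):ℂ)*Complex.I * Complex.exp (((-n:ℤ):ℂ)*Complex.I*x))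
          = (((-n:ℤ):ℂ)*Complex.I)^2 * Complex.exp (((-n:ℤ):ℂ)*Complex.I*x) by ring] at this
        simpa [hEdef] using this)
      (fun x _ => by simpa using (hlinex U hU x s).ofReal_comp)
      (hintE (-n) ((((-n:ℤ):ℂ)*Complex.I)^2))
      (hintV Ux hUx'.continuous s)
    simp only [hE2pi, hE0, one_mul, mul_one] at ibp1 ibp2
    rw [hUxper] at ibp1
    rw [hUper] at ibp2
    rw [ibp1, ibp2]
    simp only [sub_self, zero_sub, neg_neg, sub_zero]
    have : (∫ x in (0:ℝ)..(2*Real.pi), (((-n:ℤ):ℂ)*Complex.I)^2 * E (-n) x * (U (x,s) : ℂ))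
        = (((-n:ℤ):ℂ)*Complex.I)^2 * c n s := by
      rw [hcdef]
      rw [← intervalIntegral.integral_const_mul]
      congr 1; funext x; ring
    rw [this]
    push_cast
    rw [show ((-(n:ℂ)) * Complex.I)^2 = -(n:ℂ)^2 by rw [mul_pow, Complex.I_sq]; ring]
  have hODE : ∀ (n : ℤ) (s : ℝ), HasDerivAt (c' n) ((n:ℂ)^2 * c n s) s := by
    intro n s
    have h2 := hc2 n s
    have heq : (∫ x in (0:ℝ)..(2*Real.pi), E (-n) x * (Uss (x,s) : ℂ)) = (n:ℂ)^2 * c n s := by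
      have hU2 : ∀ x : ℝ, (Uss (x,s) : ℂ) = -(Uxx (x,s) : ℂ) := by
        intro x
        have h := hPDE x s
        have h2 : Uss (x,s) = -Uxx (x,s) := by linarith
        rw [h2]; push_cast; ring
      calc (∫ x in (0:ℝ)..(2*Real.pi), E (-n) x * (Uss (x,s) : ℂ))
          = ∫ x in (0:ℝ)..(2*Real.pi), -(E (-n) x * (Uxx (x,s) : ℂ)) := by
            apply intervalIntegral.integral_congr
            intro x _
            show E (-n) x * (Uss (x,s) : ℂ) = -(E (-n) x * (Uxx (x,s) : ℂ))
            rw [hU2 x]; ring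
        _ = -(∫ x in (0:ℝ)..(2*Real.pi), E (-n) x * (Uxx (x,s) : ℂ)) :=
            intervalIntegral.integral_neg
        _ = (n:ℂ)^2 * c n s := by rw [hIBP n s]; ring
    rwa [heq] at h2
  have hM : ∀ (n : ℤ) (s : ℝ), ‖c n s‖ ≤ (2*Real.pi*C) * Real.exp ((1+γ)*|s|) := by
    intro n s
    have hb : ∀ x ∈ Set.uIoc (0:ℝ) (2*Real.pi),
        ‖E (-n) x * (U (x,s) : ℂ)‖ ≤ C * Real.exp ((1+γ)*|s|) := by
      intro x _
      rw [norm_mul]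
      rw [show ‖E (-n) x‖ = 1 from eI_norm (-n) x]
      rw [one_mul, Complex.norm_real, Real.norm_eq_abs]
      calc |U (x,s)| ≤ C * Real.cosh s ^ (1+γ) := hbound x s
        _ ≤ C * Real.exp ((1+γ)*|s|) := by
            have := cosh_rpow_le γ s (by linarith)
            exact mul_le_mul_of_nonneg_left this hC.le
    have := intervalIntegral.norm_integral_le_of_norm_le_const hb
    calc ‖c n s‖ ≤ C * Real.exp ((1+γ)*|s|) * |2*Real.pi - 0| := this
      _ = (2*Real.pi*C) * Real.exp ((1+γ)*|s|) := by
          have habs : |2*Real.pi - 0| = 2*Real.pi := by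
            rw [sub_zero]; exact abs_of_pos (by positivity)
          rw [habs]; ring
  have hkill : ∀ n : ℤ, 2 ≤ |n| → ∀ s : ℝ, c n s = 0 := by
    intro n hn
    set k : ℝ := |(n:ℝ)| with hkdef
    have hk2 : (2:ℝ) ≤ k := by
      rw [hkdef, ← Int.cast_abs]
      exact_mod_cast hn
    have hk0 : k ≠ 0 := by intro h; rw [h] at hk2; linarith
    have hksq : ((k:ℝ):ℂ)^2 = (n:ℂ)^2 := by
      rw [hkdef]
      push_cast [← Complex.ofReal_pow, sq_abs]
      norm_num
    obtain ⟨A, B, hrep⟩ := ode2 k hk0 (c n) (c' n) (hc1 n)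
      (fun s => by rw [hksq]; exact hODE n s)
    have hγk : 1 + γ < k := by linarith
    have hA : A = 0 := by
      apply killA k (1+γ) (2*Real.pi*C) hγk (by linarith) A B
      intro s hs
      rw [← hrep s]
      have := hM n s
      rwa [_root_.abs_of_nonneg hs] at this
    have hB : B = 0 := by
      apply killA k (1+γ) (2*Real.pi*C) hγk (by linarith) B A
      intro s hs
      have hrep2 := hrep (-s)
      have he : c n (-s) = B * Complex.exp ((k:ℂ)*s) + A * Complex.exp (-((k:ℂ)*s)) := by
        rw [hrep2]
        push_cast
        rw [show (k:ℂ) * (-(s:ℂ)) = -((k:ℂ)*s) by ring]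
        ring_nf
      rw [← he]
      have := hM n (-s)
      rwa [abs_neg, _root_.abs_of_nonneg hs] at this
    intro s
    rw [hrep s, hA, hB]
    simp
  -- mode 0
  have h0c' : ∀ s : ℝ, c' 0 s = c' 0 0 := by
    have hd : ∀ s : ℝ, HasDerivAt (c' 0) 0 s := by
      intro s
      have := hODE 0 s
      simpa using this
    intro s
    exact is_const_of_deriv_eq_zero (fun t => (hd t).differentiableAt)
      (fun t => (hd t).deriv) s 0
  have h0 : ∀ s : ℝ, c 0 s = c 0 0 + c' 0 0 * s := by
    have hd : ∀ s : ℝ, HasDerivAt (fun t : ℝ => c 0 t - c' 0 0 * t) 0 s := by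
      intro s
      have h1 := hc1 0 s
      rw [h0c' s] at h1
      have h2 : HasDerivAt (fun t : ℝ => c' 0 0 * (t:ℂ)) (c' 0 0) s := by
        simpa using ((hasDerivAt_id s).ofReal_comp).const_mul (c' 0 0)
      simpa [Pi.sub_def] using h1.sub h2
    intro s
    have := is_const_of_deriv_eq_zero (fun t => (hd t).differentiableAt)
      (fun t => (hd t).deriv) s 0
    push_cast at this ⊢
    linear_combination this
  -- modes ±1
  have hone : ((1:ℝ):ℂ)^2 = ((1:ℤ):ℂ)^2 := by norm_num
  obtain ⟨A1, B1, h1⟩ := ode2 1 one_ne_zero (c 1) (c' 1) (hc1 1)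
    (fun s => by rw [show (((1:ℝ)):ℂ)^2 = ((1:ℤ):ℂ)^2 by norm_num]; exact hODE 1 s)
  obtain ⟨A2, B2, h2⟩ := ode2 1 one_ne_zero (c (-1)) (c' (-1)) (hc1 (-1))
    (fun s => by rw [show (((1:ℝ)):ℂ)^2 = (((-1):ℤ):ℂ)^2 by norm_num]; exact hODE (-1) s)
  have h1' : ∀ s : ℝ, c 1 s = A1 * (Real.exp s : ℂ) + B1 * (Real.exp (-s) : ℂ) := by
    intro s
    rw [h1 s]
    push_cast
    norm_num [Complex.exp_neg]
  have h2' : ∀ s : ℝ, c (-1) s = A2 * (Real.exp s : ℂ) + B2 * (Real.exp (-s) : ℂ) := by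
    intro s
    rw [h2 s]
    push_cast
    norm_num [Complex.exp_neg]
  have hEadd : ∀ (m : ℤ) (x : ℝ), E m (x + 2*Real.pi) = E m x := by
    intro m x
    calc E m (x + 2*Real.pi) = E m x * E m (2*Real.pi) := by
          show Complex.exp ((m:ℂ)*Complex.I*((x + 2*Real.pi : ℝ):ℂ))
            = Complex.exp ((m:ℂ)*Complex.I*((x:ℝ):ℂ)) * Complex.exp ((m:ℂ)*Complex.I*((2*Real.pi:ℝ):ℂ))
          rw [← Complex.exp_add]
          congr 1
          push_cast
          ring
      _ = E m x := by rw [hE2pi, mul_one]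
  have key : ∀ (s x : ℝ), (u x s : ℂ) =
      (((2*Real.pi)⁻¹ : ℝ) : ℂ) * (c 0 s + c 1 s * E 1 x + c (-1) s * E (-1) x) := by
    intro s x
    set κ : ℂ := (((2*Real.pi)⁻¹ : ℝ) : ℂ) with hκ
    set r : ℝ → ℂ := fun y => (U (y, s) : ℂ)
      - κ * (c 0 s * E 0 y + c 1 s * E 1 y + c (-1) s * E (-1) y) with hrdef
    have hrper : Function.Periodic r (2*Real.pi) := by
      intro y
      rw [hrdef]
      simp only
      rw [hEadd 0, hEadd 1, hEadd (-1)]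
      have hUp : U (y + 2*Real.pi, s) = U (y, s) := hper y s
      rw [hUp]
    have hrcont : Continuous r := by
      apply Continuous.sub
      · exact Complex.continuous_ofReal.comp
          (hU.continuous.comp (continuous_id.prodMk continuous_const))
      · exact continuous_const.mul (((continuous_const.mul (hEcont 0)).add
          (continuous_const.mul (hEcont 1))).add (continuous_const.mul (hEcont (-1))))
    set R : C(AddCircle (2*Real.pi), ℂ) := ⟨hrper.lift, hrcont.quotient_liftOn' _⟩ with hRdef
    have hRcoe : ∀ y : ℝ, R (y : AddCircle (2*Real.pi)) = r y := fun y => rfl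
    have hcoeff : ∀ nn : ℤ, fourierCoeff (⇑R) nn = 0 := by
      intro nn
      rw [fourierCoeff_eq_intervalIntegral (⇑R) nn 0]
      have hzero : (∫ y in (0:ℝ)..(0 + 2*Real.pi),
          (@fourier (2*Real.pi) (-nn) (y : AddCircle (2*Real.pi)) : ℂ) • R (y : AddCircle (2*Real.pi))) = 0 := by
        have hfx : ∀ y : ℝ, (@fourier (2*Real.pi) (-nn) (y : AddCircle (2*Real.pi)) : ℂ) • R (y : AddCircle (2*Real.pi))
            = E (-nn) y * r y := by
          intro y
          rw [smul_eq_mul, hRcoe y]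
          congr 1
          rw [fourier_coe_apply]
          show Complex.exp (2 * (Real.pi:ℂ) * Complex.I * ((-nn : ℤ):ℂ) * (y:ℂ) / ((2*Real.pi:ℝ):ℂ))
            = Complex.exp (((-nn : ℤ):ℂ)*Complex.I*(y:ℝ))
          congr 1
          have hpi : ((Real.pi:ℝ):ℂ) ≠ 0 := by
            exact_mod_cast Real.pi_ne_zero
          push_cast
          field_simp
        rw [zero_add]
        rw [intervalIntegral.integral_congr (fun y _ => hfx y)]
        have hexpand : ∀ y : ℝ, E (-nn) y * r y
            = E (-nn) y * (U (y,s):ℂ)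
              - ((κ * c 0 s) * (E (-nn) y * E 0 y)
              + (κ * c 1 s) * (E (-nn) y * E 1 y)
              + (κ * c (-1) s) * (E (-nn) y * E (-1) y)) := by
          intro y
          rw [hrdef]
          simp only
          ring
        rw [intervalIntegral.integral_congr (fun y _ => hexpand y)]
        have hintEE : ∀ (m : ℤ) (c0 : ℂ), IntervalIntegrable
            (fun y => c0 * (E (-nn) y * E m y)) MeasureTheory.volume 0 (2*Real.pi) :=
          fun m c0 => (continuous_const.mul ((hEcont (-nn)).mul (hEcont m))).intervalIntegrable 0 (2*Real.pi)
        rw [intervalIntegral.integral_sub (hint U hU.continuous (-nn) s)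
          (((hintEE 0 _).add (hintEE 1 _)).add (hintEE (-1) _))]
        rw [intervalIntegral.integral_add ((hintEE 0 _).add (hintEE 1 _)) (hintEE (-1) _)]
        rw [intervalIntegral.integral_add (hintEE 0 _) (hintEE 1 _)]
        rw [intervalIntegral.integral_const_mul, intervalIntegral.integral_const_mul,
          intervalIntegral.integral_const_mul]
        have ho0 := orth nn 0
        have ho1 := orth nn 1
        have hom1 := orth nn (-1)
        rw [show (∫ y in (0:ℝ)..(2*Real.pi), E (-nn) y * E 0 y)
            = (if (0:ℤ) = nn then (2*Real.pi:ℂ) else 0) from ho0]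
        rw [show (∫ y in (0:ℝ)..(2*Real.pi), E (-nn) y * E 1 y)
            = (if (1:ℤ) = nn then (2*Real.pi:ℂ) else 0) from ho1]
        rw [show (∫ y in (0:ℝ)..(2*Real.pi), E (-nn) y * E (-1) y)
            = (if (-1:ℤ) = nn then (2*Real.pi:ℂ) else 0) from hom1]
        have hcnn : (∫ y in (0:ℝ)..(2*Real.pi), E (-nn) y * (U (y,s):ℂ)) = c nn s := rfl
        rw [hcnn]
        have hκ2 : κ * (2*Real.pi : ℂ) = 1 := by
          rw [hκ]
          rw [show ((2:ℂ)*(Real.pi:ℂ)) = ((2*Real.pi:ℝ):ℂ) by push_cast; ring]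
          rw [← Complex.ofReal_mul]
          rw [inv_mul_cancel₀ (by positivity : (2*Real.pi:ℝ) ≠ 0)]
          exact Complex.ofReal_one
        rcases eq_or_ne nn 0 with h | h0
        · subst h
          rw [if_pos rfl, if_neg (show (1:ℤ) ≠ 0 by norm_num),
            if_neg (show (-1:ℤ) ≠ 0 by norm_num)]
          linear_combination (-(c 0 s)) * hκ2
        rcases eq_or_ne nn 1 with h | h1
        · subst h
          rw [if_neg (show (0:ℤ) ≠ 1 by norm_num), if_pos rfl,
            if_neg (show (-1:ℤ) ≠ 1 by norm_num)]
          linear_combination (-(c 1 s)) * hκ2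
        rcases eq_or_ne nn (-1) with h | hm1
        · subst h
          rw [if_neg (show (0:ℤ) ≠ -1 by norm_num), if_neg (show (1:ℤ) ≠ -1 by norm_num),
            if_pos rfl]
          linear_combination (-(c (-1) s)) * hκ2
        · have hnn2 : 2 ≤ |nn| := by
            rcases (by omega : 2 ≤ nn ∨ nn ≤ -2) with h | h
            · rw [_root_.abs_of_nonneg (by omega)]; exact h
            · rw [abs_of_nonpos (by omega)]; omega
          rw [if_neg (Ne.symm h0), if_neg (Ne.symm h1), if_neg (Ne.symm hm1)]
          rw [hkill nn hnn2 s]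
          ring
      rw [hzero, smul_zero]
    have hr0 : r x = 0 := by
      have := zero_of_fourierCoeff_zero R hcoeff (x : AddCircle (2*Real.pi))
      rwa [hRcoe x] at this
    rw [hrdef] at hr0
    simp only at hr0
    have hE0x : E 0 x = 1 := by
      show Complex.exp (((0:ℤ):ℂ)*Complex.I*((x:ℝ):ℂ)) = 1
      norm_num
    rw [hE0x] at hr0
    have hUxs : U (x, s) = u x s := rfl
    rw [hUxs] at hr0
    linear_combination hr0
  refine ⟨(2*Real.pi)⁻¹ * (c 0 0).re, (2*Real.pi)⁻¹ * (c' 0 0).re,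
    (2*Real.pi)⁻¹ * (A1.re + A2.re), (2*Real.pi)⁻¹ * (B1.re + B2.re),
    (2*Real.pi)⁻¹ * (A2.im - A1.im), (2*Real.pi)⁻¹ * (B2.im - B1.im), ?_⟩
  intro x s
  have hk := key s x
  rw [h0 s, h1' s, h2' s] at hk
  have hE1x : E 1 x = (Real.cos x : ℂ) + (Real.sin x : ℂ) * Complex.I := by
    show Complex.exp (((1:ℤ):ℂ)*Complex.I*((x:ℝ):ℂ)) = _
    rw [show ((1:ℤ):ℂ)*Complex.I*((x:ℝ):ℂ) = (x:ℂ)*Complex.I by push_cast; ring,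
      Complex.exp_mul_I]
    rw [← Complex.ofReal_cos, ← Complex.ofReal_sin]
  have hE1x' : E (-1) x = (Real.cos x : ℂ) - (Real.sin x : ℂ) * Complex.I := by
    show Complex.exp ((((-1):ℤ):ℂ)*Complex.I*((x:ℝ):ℂ)) = _
    rw [show (((-1):ℤ):ℂ)*Complex.I*((x:ℝ):ℂ) = (((-x : ℝ)):ℂ)*Complex.I by push_cast; ring,
      Complex.exp_mul_I]
    rw [← Complex.ofReal_cos, ← Complex.ofReal_sin, Real.cos_neg, Real.sin_neg]
    push_cast
    ring
  rw [hE1x, hE1x'] at hk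
  have hre := congrArg Complex.re hk
  simp only [Complex.ofReal_re, Complex.add_re, Complex.mul_re, Complex.ofReal_im,
    Complex.add_im, Complex.mul_im, Complex.I_re, Complex.I_im, Complex.sub_re,
    Complex.sub_im] at hre
  rw [hre]
  ring
end

section
/- Let γ ∈ (0,1) and C > 0. Let u : ℝ² → ℝ be a C² function, 2π-periodic in its first variable x, harmonic on the open half-plane {(x,s) : s < 0} (i.e. ∂²u/∂x² + ∂²u/∂s² = 0 there), satisfying the decay bound |u(x,s)| ≤ C·e^{(1+γ)s} for all s ≤ 0, and suppose there exist real constants a, b, c with u(x,0) = a + b·cos(x) + c·sin(x) for all x ∈ ℝ. Then u(x,s) = 0 for all s ≤ 0. -/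
/-!
Expand each horizontal slice `u(·, s)` in a Fourier series in `x`. Periodicity and harmonicity turn
the `n`-th coefficient `v(s)` into a solution of `v'' = n² v` on `s < 0`, and the bound on `u` gives
`‖v(s)‖ ≤ C e^{(1+γ)s}`. Factoring `v'' - n² v = (∂ - |n|)(∂ + |n|) v`, the solution is
`A e^{|n|s} + B e^{-|n|s}` (or `A + B s` when `n = 0`), and decay at `-∞` forces `B = 0`. For
`|n| ≤ 1` the rate `1 + γ > |n|` forces `A = 0` as well; for `|n| ≥ 2` instead `A = v(0)` is the
`n`-th coefficient of the trace, which vanishes because the trace is a lower mode. So every slice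
has vanishing Fourier coefficients, hence vanishes by Parseval.
-/

open Real MeasureTheory Set Filter Topology intervalIntegral Function

theorem hasDerivAt_intervalIntegral_of_continuous {E : Type*} [NormedAddCommGroup E]
    [NormedSpace ℝ E] {a b : ℝ} {G G' : ℝ → ℝ → E} (hG : ∀ s, Continuous fun x => G x s)
    (hG' : Continuous (uncurry G')) (hderiv : ∀ x s, HasDerivAt (G x) (G' x s) s) (s₀ : ℝ) :
    HasDerivAt (fun s => ∫ x in a..b, G x s) (∫ x in a..b, G' x s₀) s₀ := by
  obtain ⟨C, hC⟩ := (isCompact_uIcc.prod (isCompact_closedBall s₀ 1)).exists_bound_of_continuousOn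
    hG'.continuousOn
  refine (hasDerivAt_integral_of_dominated_loc_of_deriv_le (bound := fun _ => C)
    (Metric.ball_mem_nhds s₀ one_pos) (.of_forall fun s => (hG s).aestronglyMeasurable)
    ((hG s₀).intervalIntegrable _ _)
    (hG'.comp (continuous_id.prodMk continuous_const)).aestronglyMeasurable
    (.of_forall fun x hx s hs => hC (x, s) ⟨uIoc_subset_uIcc hx, Metric.ball_subset_closedBall hs⟩)
    intervalIntegrable_const (.of_forall fun x _ s _ => hderiv x s)).2

section Fourier

variable {a b : ℝ} (hab : a < b)

theorem fourierCoeffOn_neg (f : ℝ → ℂ) (n : ℤ) :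
    fourierCoeffOn hab (fun x => -f x) n = -fourierCoeffOn hab f n := by
  simpa using fourierCoeffOn.const_mul f (-1) n hab

theorem norm_fourierCoeffOn_le {f : ℝ → ℂ} {M : ℝ} (hf : ∀ x ∈ Ioc a b, ‖f x‖ ≤ M) (n : ℤ) :
    ‖fourierCoeffOn hab f n‖ ≤ M := by
  have hba : 0 < b - a := sub_pos.2 hab
  have hint : ‖∫ x in a..b, fourier (-n) (x : AddCircle (b - a)) • f x‖ ≤ M * |b - a| := by
    refine norm_integral_le_of_norm_le_const fun x hx => ?_
    rw [uIoc_of_le hab.le] at hx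
    rw [norm_smul, fourier_apply, Circle.norm_coe, one_mul]
    exact hf x hx
  rw [abs_of_pos hba] at hint
  rw [fourierCoeffOn_eq_integral, norm_smul, Real.norm_of_nonneg (by positivity), one_div,
    inv_mul_le_iff₀ hba, mul_comm]
  exact hint

theorem fourierCoeffOn_deriv_of_eq {f f' : ℝ → ℂ} (hf : ∀ x ∈ uIcc a b, HasDerivAt f (f' x) x)
    (hf' : IntervalIntegrable f' volume a b) (hfab : f b = f a) (n : ℤ) :
    fourierCoeffOn hab f' n = 2 * π * Complex.I * n / (b - a) * fourierCoeffOn hab f n := by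
  have hba : (b : ℂ) - a ≠ 0 := sub_ne_zero.2 (Complex.ofReal_injective.ne hab.ne')
  rcases eq_or_ne n 0 with rfl | hn
  · simp [fourierCoeffOn_eq_integral, integral_eq_sub_of_hasDerivAt hf hf', hfab]
  · rw [fourierCoeffOn_of_hasDerivAt hab hn hf hf', hfab, sub_self, mul_zero, zero_sub]
    have : (π : ℂ) ≠ 0 := Complex.ofReal_ne_zero.2 pi_ne_zero
    field_simp

theorem fourierCoeffOn_deriv_deriv_of_eq {f f' f'' : ℝ → ℂ}
    (hf : ∀ x ∈ uIcc a b, HasDerivAt f (f' x) x) (hf' : ∀ x ∈ uIcc a b, HasDerivAt f' (f'' x) x)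
    (hf'' : IntervalIntegrable f'' volume a b) (hfab : f b = f a) (hf'ab : f' b = f' a) (n : ℤ) :
    fourierCoeffOn hab f'' n = -(2 * π * n / (b - a)) ^ 2 * fourierCoeffOn hab f n := by
  have hf'int : IntervalIntegrable f' volume a b :=
    ContinuousOn.intervalIntegrable fun x hx => (hf' x hx).continuousAt.continuousWithinAt
  rw [fourierCoeffOn_deriv_of_eq hab hf' hf'' hf'ab, fourierCoeffOn_deriv_of_eq hab hf hf'int hfab]
  linear_combination (2 * π * n / (b - a)) ^ 2 * fourierCoeffOn hab f n * Complex.I_sq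

theorem eqOn_zero_of_fourierCoeffOn_eq_zero {f : ℝ → ℂ} (hf : ContinuousOn f (Icc a b))
    (hcoeff : ∀ n, fourierCoeffOn hab f n = 0) : EqOn f 0 (Icc a b) := by
  obtain ⟨M, hM⟩ := isCompact_Icc.exists_bound_of_continuousOn hf
  have hL2 : MemLp f 2 (volume.restrict (Ioc a b)) :=
    MemLp.of_bound ((hf.mono Ioc_subset_Icc_self).aestronglyMeasurable measurableSet_Ioc) M
      ((ae_restrict_iff' measurableSet_Ioc).2
        (.of_forall fun x hx => hM x (Ioc_subset_Icc_self hx)))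
  have hzero : ∫ x in a..b, ‖f x‖ ^ 2 = 0 := by
    have hparseval := hasSum_sq_fourierCoeffOn hab hL2
    simp only [hcoeff, norm_zero, zero_pow two_ne_zero] at hparseval
    simpa [(sub_pos.2 hab).ne'] using hasSum_zero.unique hparseval
  intro x hx
  by_contra hfx
  exact (integral_pos hab (hf.norm.pow 2) (fun y _ => sq_nonneg ‖f y‖)
    ⟨x, hx, pow_pos (norm_pos_iff.2 hfx) 2⟩).ne' hzero

theorem hasDerivAt_fourierCoeffOn_of_continuous {G G' : ℝ → ℝ → ℂ}
    (hG : ∀ s, Continuous fun x => G x s) (hG' : Continuous (uncurry G'))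
    (hderiv : ∀ x s, HasDerivAt (G x) (G' x s) s) (n : ℤ) (s₀ : ℝ) :
    HasDerivAt (fun s => fourierCoeffOn hab (fun x => G x s) n)
      (fourierCoeffOn hab (fun x => G' x s₀) n) s₀ := by
  have hfourier : Continuous fun x : ℝ => fourier (-n) (x : AddCircle (b - a)) :=
    (map_continuous _).comp (AddCircle.continuous_mk' _)
  simp only [fourierCoeffOn_eq_integral]
  refine (hasDerivAt_intervalIntegral_of_continuous
    (G' := fun x s => fourier (-n) (x : AddCircle (b - a)) • G' x s) (fun s => hfourier.smul (hG s))
    ((hfourier.comp continuous_fst).smul hG') (fun x s => (hderiv x s).const_smul _)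
    s₀).const_smul _

end Fourier

theorem Function.Periodic.eq_zero_of_fourierCoeffOn_eq_zero {T : ℝ} (hT : 0 < T) {f : ℝ → ℂ}
    (hf : Continuous f) (hper : Periodic f T) (hcoeff : ∀ n, fourierCoeffOn hT f n = 0) :
    f = 0 := by
  funext x
  obtain ⟨y, hy, hxy⟩ := hper.exists_mem_Ico₀ hT x
  rw [hxy]
  exact eqOn_zero_of_fourierCoeffOn_eq_zero hT hf.continuousOn hcoeff (Ico_subset_Icc_self hy)

theorem fourierCoeffOn_eq_zero_of_hasDerivAt_neg {f f' : ℝ → ℂ} (hf : ∀ x, HasDerivAt f (f' x) x)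
    (hf' : ∀ x, HasDerivAt f' (-f x) x) (hfp : f (2 * π) = f 0) (hf'p : f' (2 * π) = f' 0)
    {n : ℤ} (hn : n ^ 2 ≠ 1) : fourierCoeffOn two_pi_pos f n = 0 := by
  have hcont : Continuous f := continuous_iff_continuousAt.2 fun x => (hf x).continuousAt
  have h := fourierCoeffOn_deriv_deriv_of_eq two_pi_pos (fun x _ => hf x) (fun x _ => hf' x)
    (hcont.neg.intervalIntegrable _ _) hfp hf'p n
  have h2π : (2 * π : ℂ) ≠ 0 := by exact_mod_cast two_pi_pos.ne'
  push_cast at h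
  rw [fourierCoeffOn_neg, sub_zero, mul_div_cancel_left₀ _ h2π] at h
  have hn' : (n : ℂ) ^ 2 - 1 ≠ 0 := sub_ne_zero.2 (by exact_mod_cast hn)
  exact (mul_eq_zero.1 (by linear_combination h : ((n : ℂ) ^ 2 - 1) * _ = 0)).resolve_left hn'

theorem fourierCoeffOn_lowerMode_eq_zero (a b c : ℝ) {n : ℤ} (hn : 2 ≤ |n|) :
    fourierCoeffOn two_pi_pos (fun x => ((a + b * cos x + c * sin x : ℝ) : ℂ)) n = 0 := by
  -- The derivative `g'` of the trace `g` solves `f'' = -f`, so its coefficients vanish off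
  -- `n = ±1`; and `ĝ'(n) = i n ĝ(n)`.
  set g' : ℝ → ℂ := fun x => ((c * cos x - b * sin x : ℝ) : ℂ)
  set g'' : ℝ → ℂ := fun x => ((-(b * cos x) - c * sin x : ℝ) : ℂ)
  have hg : ∀ x, HasDerivAt (fun x => ((a + b * cos x + c * sin x : ℝ) : ℂ)) (g' x) x := fun x =>
    ((((hasDerivAt_cos x).const_mul b).const_add a).add
      ((hasDerivAt_sin x).const_mul c)).ofReal_comp.congr_deriv (congrArg _ (by ring))
  have hg' : ∀ x, HasDerivAt g' (g'' x) x := fun x =>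
    (((hasDerivAt_cos x).const_mul c).sub
      ((hasDerivAt_sin x).const_mul b)).ofReal_comp.congr_deriv (congrArg _ (by ring))
  have hg'' : ∀ x, HasDerivAt g'' (-g' x) x := fun x =>
    ((((hasDerivAt_cos x).const_mul b).neg).sub
      ((hasDerivAt_sin x).const_mul c)).ofReal_comp.congr_deriv (by simp only [g']; push_cast; ring)
  have hn2 : n ^ 2 ≠ 1 := by nlinarith [sq_abs n]
  have hg'0 := fourierCoeffOn_eq_zero_of_hasDerivAt_neg hg' hg'' (by simp [g']) (by simp [g'']) hn2
  have hrel := fourierCoeffOn_deriv_of_eq two_pi_pos (fun x _ => hg x)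
    ((by fun_prop : Continuous g').intervalIntegrable _ _) (by simp) n
  rw [hg'0, eq_comm, mul_eq_zero] at hrel
  refine hrel.resolve_left ?_
  have hn0 : (n : ℂ) ≠ 0 := by exact_mod_cast (show n ≠ 0 by rintro rfl; simp at hn)
  have : (π : ℂ) ≠ 0 := Complex.ofReal_ne_zero.2 pi_ne_zero
  simp [hn0, this]

section ODE

variable {E : Type*} [NormedAddCommGroup E]

theorem tendsto_atBot_zero_of_norm_le_exp {f : ℝ → E} {M c : ℝ} (hc : 0 < c)
    (hf : ∀ s < 0, ‖f s‖ ≤ M * exp (c * s)) : Tendsto f atBot (𝓝 0) := by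
  refine squeeze_zero_norm' ((eventually_lt_atBot 0).mono hf) ?_
  simpa using (tendsto_exp_atBot.comp (tendsto_id.const_mul_atBot hc)).const_mul M

variable [NormedSpace ℝ E]

theorem exists_eq_exp_smul_of_hasDerivAt_Iio {l : ℝ} {q : ℝ → E}
    (hq : ∀ s < 0, HasDerivAt q (l • q s) s) : ∃ Q : E, ∀ s < 0, q s = exp (l * s) • Q := by
  have hderiv : ∀ s < 0, HasDerivAt (fun s => exp (-l * s) • q s) 0 s := by
    intro s hs
    exact (((hasDerivAt_id' s).const_mul (-l)).exp.smul (hq s hs)).congr_deriv (by module)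
  obtain ⟨Q, hQ⟩ := isOpen_Iio.exists_is_const_of_deriv_eq_zero isPreconnected_Iio
    (fun s hs => (hderiv s hs).differentiableAt.differentiableWithinAt)
    (fun s hs => (hderiv s hs).deriv)
  refine ⟨Q, fun s hs => ?_⟩
  rw [← hQ s hs, smul_smul, ← exp_add]
  simp

theorem eq_zero_of_hasDerivAt_zero_of_tendsto_atBot {v w : ℝ → E}
    (hv : ∀ s < 0, HasDerivAt v (w s) s) (hw : ∀ s < 0, HasDerivAt w 0 s)
    (hlim : Tendsto v atBot (𝓝 0)) : ∀ s < 0, v s = 0 := by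
  obtain ⟨W, hW⟩ := exists_eq_exp_smul_of_hasDerivAt_Iio (l := 0) (q := w) (by simpa using hw)
  obtain ⟨V, hV⟩ := exists_eq_exp_smul_of_hasDerivAt_Iio (l := 0) (q := fun s => v s - s • W)
    fun s hs => ((hv s hs).sub ((hasDerivAt_id' s).smul_const W)).congr_deriv (by simp [hW s hs])
  simp only [zero_mul, exp_zero, one_smul, sub_eq_iff_eq_add] at hV
  have hW0 : W = 0 := by
    have hlim' : Tendsto (fun s : ℝ => s⁻¹ • v s) atBot (𝓝 W) := by
      have hsum := (tendsto_const_nhds (x := W)).add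
        ((tendsto_inv_atBot_zero (𝕜 := ℝ)).smul_const V)
      rw [zero_smul, add_zero] at hsum
      refine hsum.congr' ?_
      filter_upwards [eventually_lt_atBot 0] with s hs
      rw [hV s hs, smul_add, smul_smul, inv_mul_cancel₀ hs.ne, one_smul, add_comm]
    simpa using tendsto_nhds_unique hlim' (tendsto_inv_atBot_zero.smul hlim)
  have hV0 : V = 0 := by
    refine tendsto_nhds_unique (tendsto_const_nhds.congr' ?_) hlim
    filter_upwards [eventually_lt_atBot 0] with s hs
    simp [hV s hs, hW0]
  intro s hs
  simp [hV s hs, hW0, hV0]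

theorem exists_eq_exp_smul_of_hasDerivAt_of_norm_le {l μ M : ℝ} (hl : 0 < l) (hlμ : 0 < l + μ)
    {v w : ℝ → E} (hv : ∀ s < 0, HasDerivAt v (w s) s) (hw : ∀ s < 0, HasDerivAt w (l ^ 2 • v s) s)
    (hM : ∀ s < 0, ‖v s‖ ≤ M * exp (μ * s)) : ∃ A : E, ∀ s < 0, v s = exp (l * s) • A := by
  obtain ⟨Q, hQ⟩ := exists_eq_exp_smul_of_hasDerivAt_Iio (l := l) (q := fun s => w s + l • v s)
    fun s hs => ((hw s hs).add ((hv s hs).const_smul l)).congr_deriv (by module)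
  obtain ⟨P, hP⟩ := exists_eq_exp_smul_of_hasDerivAt_Iio (l := -l) (q := fun s => w s - l • v s)
    fun s hs => ((hw s hs).sub ((hv s hs).const_smul l)).congr_deriv (by module)
  have hv_eq : ∀ s < 0, v s = exp (l * s) • (2 * l)⁻¹ • Q - exp (-l * s) • (2 * l)⁻¹ • P := by
    intro s hs
    have h2l : (2 * l) • v s = exp (l * s) • Q - exp (-l * s) • P := by
      linear_combination (norm := module) hQ s hs - hP s hs
    rw [← inv_smul_smul₀ (by positivity : 2 * l ≠ 0) (v s), h2l]
    module
  have hP0 : (2 * l)⁻¹ • P = 0 := by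
    have hdecay : Tendsto (fun s => exp (l * s) • v s) atBot (𝓝 0) := by
      refine tendsto_atBot_zero_of_norm_le_exp (M := M) hlμ fun s hs => ?_
      rw [norm_smul, norm_of_nonneg (exp_pos _).le, add_mul, exp_add, mul_left_comm]
      exact mul_le_mul_of_nonneg_left (hM s hs) (exp_pos _).le
    have hlim : Tendsto (fun s => exp (l * s) • v s) atBot (𝓝 (-((2 * l)⁻¹ • P))) := by
      have h := ((tendsto_exp_atBot.comp (tendsto_id.const_mul_atBot (by positivity : 0 < 2 * l))
        ).smul_const ((2 * l)⁻¹ • Q)).sub_const ((2 * l)⁻¹ • P)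
      rw [zero_smul, zero_sub] at h
      refine h.congr' ?_
      filter_upwards [eventually_lt_atBot 0] with s hs
      simp only [hv_eq s hs, comp_apply, id, smul_sub, smul_smul, ← mul_assoc, ← exp_add]
      ring_nf
      simp
    exact neg_eq_zero.1 (tendsto_nhds_unique hlim hdecay)
  exact ⟨(2 * l)⁻¹ • Q, fun s hs => by rw [hv_eq s hs, hP0, smul_zero, sub_zero]⟩

theorem eq_zero_of_hasDerivAt_of_norm_le_exp {l μ M : ℝ} (hl : 0 ≤ l) (hμ : 0 < μ) {v w : ℝ → E}
    (hv : ∀ s < 0, HasDerivAt v (w s) s) (hv0 : ContinuousWithinAt v (Iio 0) 0)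
    (hw : ∀ s < 0, HasDerivAt w (l ^ 2 • v s) s) (hM : ∀ s < 0, ‖v s‖ ≤ M * exp (μ * s))
    (h : l < μ ∨ v 0 = 0) : ∀ s ≤ 0, v s = 0 := by
  have hneg : ∀ s < 0, v s = 0 := by
    rcases hl.eq_or_lt with rfl | hl
    · exact eq_zero_of_hasDerivAt_zero_of_tendsto_atBot hv (by simpa using hw)
        (tendsto_atBot_zero_of_norm_le_exp hμ hM)
    obtain ⟨A, hA⟩ := exists_eq_exp_smul_of_hasDerivAt_of_norm_le hl (by linarith) hv hw hM
    suffices A = 0 by simpa [this] using hA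
    rcases h with hlμ | hv00
    · refine tendsto_nhds_unique (f := fun s => exp (-l * s) • v s) (tendsto_const_nhds.congr' ?_)
        (tendsto_atBot_zero_of_norm_le_exp (M := M) (sub_pos.2 hlμ) fun s hs => ?_)
      · filter_upwards [eventually_lt_atBot 0] with s hs
        rw [hA s hs, smul_smul, ← exp_add]
        simp
      · rw [norm_smul, norm_of_nonneg (exp_pos _).le, sub_mul, sub_eq_neg_add, exp_add,
          mul_left_comm, neg_mul]
        exact mul_le_mul_of_nonneg_left (hM s hs) (exp_pos _).le
    · have hlimA : Tendsto v (𝓝[<] 0) (𝓝 A) := by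
        have hcont : Continuous fun s => exp (l * s) • A := by fun_prop
        have h := (hcont.tendsto 0).mono_left (nhdsWithin_le_nhds (s := Iio 0))
        rw [mul_zero, exp_zero, one_smul] at h
        exact h.congr' (eventually_nhdsWithin_of_forall fun s hs => (hA s hs).symm)
      exact tendsto_nhds_unique hlimA (hv00 ▸ hv0)
  intro s hs
  rcases hs.lt_or_eq with hs | rfl
  · exact hneg s hs
  · exact tendsto_nhds_unique hv0
      (tendsto_const_nhds.congr' (eventually_nhdsWithin_of_forall fun s hs => (hneg s hs).symm))

end ODE

section PartialDeriv

variable {E : Type*} [NormedAddCommGroup E] [NormedSpace ℝ E]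

noncomputable def partialFst (u : ℝ → ℝ → E) (x s : ℝ) : E := deriv (fun x' => u x' s) x

noncomputable def partialSnd (u : ℝ → ℝ → E) (x s : ℝ) : E := deriv (u x) s

variable {u : ℝ → ℝ → E}

theorem hasDerivAt_partialFst (hu : Differentiable ℝ (uncurry u)) (x s : ℝ) :
    HasDerivAt (fun x' => u x' s) (partialFst u x s) x :=
  (hu.comp (differentiable_id.prodMk (differentiable_const s)) x).hasDerivAt

theorem hasDerivAt_partialSnd (hu : Differentiable ℝ (uncurry u)) (x s : ℝ) :
    HasDerivAt (u x) (partialSnd u x s) s :=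
  (hu.comp ((differentiable_const x).prodMk differentiable_id) s).hasDerivAt

theorem contDiff_partialFst {m n : WithTop ℕ∞} (hu : ContDiff ℝ n (uncurry u)) (hmn : m + 1 ≤ n) :
    ContDiff ℝ m (uncurry (partialFst u)) := by
  have hd : Differentiable ℝ (uncurry u) :=
    (hu.of_le (le_trans le_add_self hmn)).differentiable one_ne_zero
  have hfderiv : uncurry (partialFst u) = fun p => fderiv ℝ (uncurry u) p (1, 0) :=
    funext fun (x, s) => ((hd (x, s)).hasFDerivAt.comp_hasDerivAt x
      ((hasDerivAt_id' x).prodMk (hasDerivAt_const x s)) :).deriv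
  rw [hfderiv]
  exact (hu.fderiv_right hmn).clm_apply contDiff_const

theorem contDiff_partialSnd {m n : WithTop ℕ∞} (hu : ContDiff ℝ n (uncurry u)) (hmn : m + 1 ≤ n) :
    ContDiff ℝ m (uncurry (partialSnd u)) := by
  have hd : Differentiable ℝ (uncurry u) :=
    (hu.of_le (le_trans le_add_self hmn)).differentiable one_ne_zero
  have hfderiv : uncurry (partialSnd u) = fun p => fderiv ℝ (uncurry u) p (0, 1) :=
    funext fun (x, s) => ((hd (x, s)).hasFDerivAt.comp_hasDerivAt s
      ((hasDerivAt_const s x).prodMk (hasDerivAt_id' s)) :).deriv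
  rw [hfderiv]
  exact (hu.fderiv_right hmn).clm_apply contDiff_const

theorem partialFst_add_period {T : ℝ} (hper : ∀ x s, u (x + T) s = u x s) (x s : ℝ) :
    partialFst u (x + T) s = partialFst u x s := by
  simp only [partialFst, ← deriv_comp_add_const, hper]

end PartialDeriv

section Harmonic

variable {u : ℝ → ℝ → ℝ}

noncomputable def xFourierCoeff (u : ℝ → ℝ → ℝ) (n : ℤ) (s : ℝ) : ℂ :=
  fourierCoeffOn two_pi_pos (fun x => (u x s : ℂ)) n

theorem hasDerivAt_xFourierCoeff (hu : ContDiff ℝ 1 (uncurry u)) (n : ℤ) (s : ℝ) :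
    HasDerivAt (xFourierCoeff u n) (xFourierCoeff (partialSnd u) n s) s :=
  hasDerivAt_fourierCoeffOn_of_continuous two_pi_pos
    (G' := fun x s => ((partialSnd u x s : ℝ) : ℂ))
    (fun s => Complex.continuous_ofReal.comp (hu.continuous.uncurry_right s))
    (Complex.continuous_ofReal.comp (contDiff_partialSnd hu (m := 0) (by norm_num)).continuous)
    (fun x s => (hasDerivAt_partialSnd (hu.differentiable one_ne_zero) x s).ofReal_comp) n s

theorem xFourierCoeff_partialFst_partialFst (hu : ContDiff ℝ 2 (uncurry u))
    (hper : ∀ x s, u (x + 2 * π) s = u x s) (n : ℤ) (s : ℝ) :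
    xFourierCoeff (partialFst (partialFst u)) n s = -n ^ 2 * xFourierCoeff u n s := by
  have hu₁ := contDiff_partialFst hu (m := 1) (by norm_num)
  have hu₂ := contDiff_partialFst hu₁ (m := 0) (by norm_num)
  have h := fourierCoeffOn_deriv_deriv_of_eq two_pi_pos
    (fun x _ => (hasDerivAt_partialFst (hu.differentiable two_ne_zero) x s).ofReal_comp)
    (fun x _ => (hasDerivAt_partialFst (hu₁.differentiable one_ne_zero) x s).ofReal_comp)
    ((Complex.continuous_ofReal.comp (hu₂.continuous.uncurry_right s)).intervalIntegrable _ _)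
    (by simpa using congrArg Complex.ofReal (hper 0 s))
    (by simpa using congrArg Complex.ofReal (partialFst_add_period hper 0 s)) n
  have h2π : (2 * π : ℂ) ≠ 0 := by exact_mod_cast two_pi_pos.ne'
  push_cast at h
  rwa [sub_zero, mul_div_cancel_left₀ _ h2π] at h

theorem hasDerivAt_xFourierCoeff_partialSnd (hu : ContDiff ℝ 2 (uncurry u))
    (hper : ∀ x s, u (x + 2 * π) s = u x s) {s : ℝ}
    (hharm : ∀ x, iteratedDeriv 2 (fun x' => u x' s) x + iteratedDeriv 2 (u x) s = 0) (n : ℤ) :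
    HasDerivAt (xFourierCoeff (partialSnd u) n) ((n : ℝ) ^ 2 • xFourierCoeff u n s) s := by
  have hlap : ∀ x, partialSnd (partialSnd u) x s = -partialFst (partialFst u) x s := fun x => by
    have h := hharm x
    rw [iteratedDeriv_succ, iteratedDeriv_one, iteratedDeriv_succ, iteratedDeriv_one] at h
    exact eq_neg_of_add_eq_zero_right h
  refine (hasDerivAt_xFourierCoeff (contDiff_partialSnd hu (m := 1) (by norm_num)) n
    s).congr_deriv ?_
  calc xFourierCoeff (partialSnd (partialSnd u)) n s
      = fourierCoeffOn two_pi_pos (fun x => -((partialFst (partialFst u) x s : ℝ) : ℂ)) n := by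
        simp only [xFourierCoeff, hlap, Complex.ofReal_neg]
    _ = -xFourierCoeff (partialFst (partialFst u)) n s := fourierCoeffOn_neg _ _ _
    _ = (n : ℝ) ^ 2 • xFourierCoeff u n s := by
        rw [xFourierCoeff_partialFst_partialFst hu hper, Complex.real_smul]
        push_cast
        ring

theorem norm_xFourierCoeff_le {M s : ℝ} (h : ∀ x, |u x s| ≤ M) (n : ℤ) :
    ‖xFourierCoeff u n s‖ ≤ M :=
  norm_fourierCoeffOn_le two_pi_pos (fun x _ => by simpa using h x) n

end Harmonic

theorem harmonic_half_cylinder_vanishing_general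
    (γ C : ℝ) (hγ : γ ∈ Set.Ioo (0 : ℝ) 1)
    (u : ℝ → ℝ → ℝ)
    (hreg : ContDiff ℝ 2 (fun p : ℝ × ℝ => u p.1 p.2))
    (hper : ∀ x s : ℝ, u (x + 2 * Real.pi) s = u x s)
    (hharm : ∀ x s : ℝ, s < 0 →
      iteratedDeriv 2 (fun x' => u x' s) x
        + iteratedDeriv 2 (fun s' => u x s') s = 0)
    (hbound : ∀ x s : ℝ, s ≤ 0 → |u x s| ≤ C * Real.exp ((1 + γ) * s))
    (a b c : ℝ)
    (htrace : ∀ x : ℝ, u x 0 = a + b * Real.cos x + c * Real.sin x) :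
    ∀ x s : ℝ, s ≤ 0 → u x s = 0 := by
  have hu₁ : ContDiff ℝ 1 (uncurry u) := hreg.of_le one_le_two
  have hcoeff : ∀ n s, s ≤ 0 → xFourierCoeff u n s = 0 := by
    intro n
    refine eq_zero_of_hasDerivAt_of_norm_le_exp (abs_nonneg (n : ℝ)) (by linarith [hγ.1])
      (fun s _ => hasDerivAt_xFourierCoeff hu₁ n s)
      (hasDerivAt_xFourierCoeff hu₁ n 0).continuousAt.continuousWithinAt
      (fun s hs => by simpa only [sq_abs] using
        hasDerivAt_xFourierCoeff_partialSnd hreg hper (hharm · s hs) n)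
      (fun s hs => norm_xFourierCoeff_le (hbound · s hs.le) n) ?_
    rcases le_or_gt |n| 1 with hn | hn
    · left
      have : |(n : ℝ)| ≤ 1 := by exact_mod_cast hn
      linarith [hγ.1]
    · right
      simp only [xFourierCoeff, htrace]
      exact fourierCoeffOn_lowerMode_eq_zero a b c hn
  intro x s hs
  have hslice := Periodic.eq_zero_of_fourierCoeffOn_eq_zero two_pi_pos (f := fun x => (u x s : ℂ))
    (Complex.continuous_ofReal.comp (hreg.continuous.uncurry_right s)) (fun x => by simp [hper])
    (fun n => hcoeff n s hs)
  simpa using congrFun hslice x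

/-- A `C²`, `2π`-periodic function on the half-cylinder `{s ≤ 0}`,
harmonic for `s < 0`, decaying like `e^{(1+γ)s}`, whose trace on `{s = 0}` is a lower
mode, vanishes identically on `{s ≤ 0}`. -/
theorem harmonic_half_cylinder_vanishing
    (γ C : ℝ) (hγ : γ ∈ Set.Ioo (0 : ℝ) 1) (hC : 0 < C)
    (u : ℝ → ℝ → ℝ)
    (hreg : ContDiff ℝ 2 (fun p : ℝ × ℝ => u p.1 p.2))
    (hper : ∀ x s : ℝ, u (x + 2 * Real.pi) s = u x s)
    (hharm : ∀ x s : ℝ, s < 0 →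
      iteratedDeriv 2 (fun x' => u x' s) x
        + iteratedDeriv 2 (fun s' => u x s') s = 0)
    (hbound : ∀ x s : ℝ, s ≤ 0 → |u x s| ≤ C * Real.exp ((1 + γ) * s))
    (a b c : ℝ)
    (htrace : ∀ x : ℝ, u x 0 = a + b * Real.cos x + c * Real.sin x) :
    ∀ x s : ℝ, s ≤ 0 → u x s = 0 :=
  harmonic_half_cylinder_vanishing_general γ C hγ u hreg hper hharm hbound a b c htrace
end

section
/- Let k ≥ 2 be an integer, γ ∈ (0,1) and C > 0. Let u : ℝ → ℝ be a C² function satisfying u''(s) = (k² − 2·sech²(s))·u(s) for all s ∈ ℝ, together with the growth bound |u(s)| ≤ C·cosh(s)^{1+γ} for all s. Then u is identically zero. -/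
open Real Filter Set

private lemma cosh_cocompact_aux : Tendsto Real.cosh (Filter.cocompact ℝ) Filter.atTop := by
  have htop : Tendsto Real.cosh atTop atTop := by
    apply tendsto_atTop_mono _ tendsto_id
    intro x
    simp only [id_eq]
    rcases le_or_gt x 1 with h | h
    · exact h.trans (Real.one_le_cosh x)
    · exact le_of_lt ((Real.self_lt_sinh_iff.2 (by linarith)).trans (Real.sinh_lt_cosh x))
  have hbot : Tendsto Real.cosh atBot atTop := by
    have := htop.comp tendsto_neg_atBot_atTop
    simpa [Function.comp_def, Real.cosh_neg] using this
  rw [cocompact_eq_atBot_atTop]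
  exact tendsto_sup.2 ⟨hbot, htop⟩

private lemma mode_aux (k : ℤ) (hk : 2 ≤ k) (γ C : ℝ) (hγ0 : 0 < γ) (hγ1 : γ < 1)
    (v : ℝ → ℝ) (hreg : ContDiff ℝ 2 v)
    (heq : ∀ s : ℝ, deriv (deriv v) s = ((k : ℝ) ^ 2 - 2 * ((Real.cosh s)⁻¹) ^ 2) * v s)
    (hbound : ∀ s : ℝ, v s ≤ C * Real.cosh s ^ (1 + γ))
    (ε : ℝ) (hε : 0 < ε) : ∀ s : ℝ, v s ≤ ε * Real.cosh s ^ 2 := by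
  set w : ℝ → ℝ := fun s => ε * Real.cosh s ^ 2 - v s with hw_def
  have hk4 : (4 : ℝ) ≤ (k : ℝ) ^ 2 := by
    have : (2 : ℝ) ≤ (k : ℝ) := by exact_mod_cast hk
    nlinarith
  have hv1 : Differentiable ℝ v := hreg.differentiable (by norm_num)
  have hv2 : ContDiff ℝ 1 (deriv v) := by
    rw [show (2 : WithTop ℕ∞) = 1 + 1 from rfl, contDiff_succ_iff_deriv] at hreg
    exact hreg.2.2
  have hv2' : Differentiable ℝ (deriv v) := hv2.differentiable (by norm_num)
  -- first derivative of w
  have hw1 : ∀ s : ℝ, HasDerivAt w (ε * 2 * (Real.cosh s * Real.sinh s) - deriv v s) s := by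
    intro s
    have h1 := ((Real.hasDerivAt_cosh s).pow 2).const_mul ε
    have h2 : HasDerivAt w (ε * ((2 : ℕ) * Real.cosh s ^ (2 - 1) * Real.sinh s) - deriv v s) s :=
      h1.sub (hv1 s).hasDerivAt
    convert h2 using 1
    push_cast
    ring
  have hdw : deriv w = fun s => ε * 2 * (Real.cosh s * Real.sinh s) - deriv v s :=
    funext fun s => (hw1 s).deriv
  -- second derivative of w
  set A : ℝ → ℝ := fun s => ε * (4 * Real.cosh s ^ 2 - 2) -
      ((k : ℝ) ^ 2 - 2 * ((Real.cosh s)⁻¹) ^ 2) * v s with hA_def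
  have hw2 : ∀ s : ℝ, HasDerivAt (deriv w) (A s) s := by
    intro s
    rw [hdw]
    have hcs : HasDerivAt (fun s => Real.cosh s * Real.sinh s)
        (Real.sinh s * Real.sinh s + Real.cosh s * Real.cosh s) s :=
      (Real.hasDerivAt_cosh s).mul (Real.hasDerivAt_sinh s)
    have h1 := (hcs.const_mul (ε * 2)).sub (hv2' s).hasDerivAt
    refine h1.congr_deriv ?_
    rw [hA_def, heq s]
    have hs2 : Real.sinh s ^ 2 = Real.cosh s ^ 2 - 1 := Real.sinh_sq s
    nlinarith [hs2]
  have hcoshpos : ∀ s : ℝ, (0 : ℝ) < Real.cosh s := Real.cosh_pos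
  have hAcont : Continuous A := by
    have h1 : Continuous fun s : ℝ => (Real.cosh s)⁻¹ :=
      Real.continuous_cosh.inv₀ fun s => (hcoshpos s).ne'
    apply Continuous.sub
    · exact continuous_const.mul
        (((continuous_const.mul (Real.continuous_cosh.pow 2))).sub continuous_const)
    · exact (continuous_const.sub (continuous_const.mul (h1.pow 2))).mul hreg.continuous
  have hwcont : Continuous w :=
    (continuous_const.mul (Real.continuous_cosh.pow 2)).sub hreg.continuous
  -- w tends to +∞ at cocompact
  have hwtop : Tendsto w (Filter.cocompact ℝ) atTop := by
    set g : ℝ → ℝ := fun t => t ^ (1 + γ) * (ε * t ^ (1 - γ) - C) with hg_def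
    have hg : Tendsto g atTop atTop := by
      have h2 : Tendsto (fun t : ℝ => ε * t ^ (1 - γ) - C) atTop atTop := by
        have := (tendsto_rpow_atTop (show (0:ℝ) < 1 - γ by linarith)).const_mul_atTop hε
        exact tendsto_atTop_add_const_right atTop (-C) this |>.congr (by intro x; ring)
      apply tendsto_atTop_mono' atTop _ h2
      filter_upwards [h2.eventually_ge_atTop 0, eventually_ge_atTop (1 : ℝ)] with t h0 h1
      calc ε * t ^ (1 - γ) - C = 1 * (ε * t ^ (1 - γ) - C) := by ring
        _ ≤ t ^ (1 + γ) * (ε * t ^ (1 - γ) - C) := by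
            apply mul_le_mul_of_nonneg_right _ h0
            exact Real.one_le_rpow h1 (by linarith)
    have hcomp : Tendsto (fun s => g (Real.cosh s)) (Filter.cocompact ℝ) atTop :=
      hg.comp cosh_cocompact_aux
    apply tendsto_atTop_mono' _ _ hcomp
    filter_upwards with s
    have hc1 : (1 : ℝ) ≤ Real.cosh s := Real.one_le_cosh s
    have key : Real.cosh s ^ (1 + γ) * (Real.cosh s ^ (1 - γ)) = Real.cosh s ^ 2 := by
      rw [← Real.rpow_add (hcoshpos s), show (1 + γ) + (1 - γ) = (2:ℝ) by ring,
        show (2:ℝ) = ((2:ℕ):ℝ) by norm_num, Real.rpow_natCast]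
    have hb := hbound s
    simp only [hg_def, hw_def]
    nlinarith [key, hb]
  obtain ⟨s₀, hs₀⟩ := hwcont.exists_forall_le hwtop
  -- reduce to showing 0 ≤ w s₀
  suffices h0 : 0 ≤ w s₀ by
    intro s
    have h := h0.trans (hs₀ s)
    simp only [hw_def] at h
    linarith
  by_contra hneg
  push_neg at hneg
  -- A s₀ < 0
  have hAs₀ : A s₀ < 0 := by
    set c := Real.cosh s₀ with hc_def
    have hc1 : (1 : ℝ) ≤ c := Real.one_le_cosh s₀
    have hi : c⁻¹ ^ 2 * c ^ 2 = 1 := by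
      field_simp
    have hi2 : c⁻¹ ^ 2 ≤ 1 := by
      nlinarith [hi, mul_nonneg (sq_nonneg c⁻¹) (show (0:ℝ) ≤ c ^ 2 - 1 by nlinarith)]
    have hq : (0 : ℝ) < (k : ℝ) ^ 2 - 2 * c⁻¹ ^ 2 := by nlinarith
    have hv0 : v s₀ = ε * c ^ 2 - w s₀ := by simp [hw_def]; rw [hc_def]; ring
    simp only [hA_def, ← hc_def]
    rw [hv0]
    nlinarith [mul_neg_of_pos_of_neg hq hneg,
      mul_nonneg (mul_nonneg hε.le (sq_nonneg c)) (sub_nonneg.2 hk4), hi]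
  have hev : ∀ᶠ s in nhds s₀, A s < 0 := (hAcont.tendsto s₀).eventually (gt_mem_nhds hAs₀)
  obtain ⟨δ, hδpos, hδ⟩ := Metric.eventually_nhds_iff.mp hev
  have hmin : IsLocalMin w s₀ := Filter.Eventually.of_forall hs₀
  have hd0 : deriv w s₀ = 0 := hmin.deriv_eq_zero
  have hdwdiff : Differentiable ℝ (deriv w) := fun s => (hw2 s).differentiableAt
  have hderiv2 : ∀ s : ℝ, deriv (deriv w) s = A s := fun s => (hw2 s).deriv
  have hanti : StrictAntiOn (deriv w) (Icc (s₀ - δ / 2) (s₀ + δ / 2)) := by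
    apply strictAntiOn_of_deriv_neg (convex_Icc _ _) hdwdiff.continuous.continuousOn
    intro x hx
    rw [interior_Icc] at hx
    rw [hderiv2 x]
    apply hδ
    rw [Real.dist_eq]
    exact abs_lt.2 ⟨by linarith [hx.1], by linarith [hx.2]⟩
  have hs0mem : s₀ ∈ Icc (s₀ - δ / 2) (s₀ + δ / 2) := ⟨by linarith, by linarith⟩
  have hmono : StrictMonoOn w (Icc (s₀ - δ / 2) s₀) := by
    apply strictMonoOn_of_deriv_pos (convex_Icc _ _) hwcont.continuousOn
    intro x hx
    rw [interior_Icc] at hx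
    have hx1 : x ∈ Icc (s₀ - δ / 2) (s₀ + δ / 2) := ⟨hx.1.le, by linarith [hx.2]⟩
    have := hanti hx1 hs0mem hx.2
    rw [hd0] at this
    exact this
  have hlt : w (s₀ - δ / 2) < w s₀ :=
    hmono ⟨le_rfl, by linarith⟩ ⟨by linarith, le_rfl⟩ (by linarith)
  exact absurd (hs₀ (s₀ - δ / 2)) (not_le.2 hlt)

/-- For an integer `k ≥ 2`, a globally defined `C²` solution of
`u'' = (k² − 2 sech²(s)) u` with sub-exponential growth `|u| ≤ C cosh(s)^(1+γ)`,
`γ ∈ (0,1)`, vanishes identically. -/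
theorem mode_k_growth_vanishing
    (k : ℤ) (hk : 2 ≤ k) (γ C : ℝ) (hγ : γ ∈ Set.Ioo (0 : ℝ) 1) (hC : 0 < C)
    (u : ℝ → ℝ) (hreg : ContDiff ℝ 2 u)
    (heq : ∀ s : ℝ,
      deriv (deriv u) s = ((k : ℝ) ^ 2 - 2 * ((Real.cosh s)⁻¹) ^ 2) * u s)
    (hbound : ∀ s : ℝ, |u s| ≤ C * Real.cosh s ^ (1 + γ)) :
    ∀ s : ℝ, u s = 0 := by
  have heq' : ∀ s : ℝ, deriv (deriv (fun x => -u x)) s =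
      ((k : ℝ) ^ 2 - 2 * ((Real.cosh s)⁻¹) ^ 2) * (-u s) := by
    intro s
    have e1 : deriv (fun x => -u x) = fun x => -deriv u x := funext fun x => deriv.neg
    rw [e1]
    have e2 : deriv (fun x => -deriv u x) s = -(deriv (deriv u) s) := deriv.neg
    rw [e2, heq s]
    ring
  have h1 := mode_aux k hk γ C hγ.1 hγ.2 u hreg heq
    (fun t => (le_abs_self _).trans (hbound t))
  have h2 := mode_aux k hk γ C hγ.1 hγ.2 (fun x => -u x) hreg.neg heq'
    (fun t => (neg_le_abs _).trans (hbound t))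
  intro s
  have hc2 : (0 : ℝ) < Real.cosh s ^ 2 := by positivity
  have hle : u s ≤ 0 := by
    by_contra h
    push_neg at h
    have h1' := h1 (u s / (2 * Real.cosh s ^ 2)) (by positivity) s
    have e : u s / (2 * Real.cosh s ^ 2) * Real.cosh s ^ 2 = u s / 2 := by
      field_simp
    rw [e] at h1'
    linarith
  have hge : -u s ≤ 0 := by
    by_contra h
    push_neg at h
    have h2' : -u s ≤ -u s / (2 * Real.cosh s ^ 2) * Real.cosh s ^ 2 :=
      h2 (-u s / (2 * Real.cosh s ^ 2)) (by positivity) s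
    have e : -u s / (2 * Real.cosh s ^ 2) * Real.cosh s ^ 2 = -u s / 2 := by
      field_simp
    rw [e] at h2'
    linarith
  linarith
end

section
/- Let c₁,…,c₆ be real numbers and set u(x,s) = c₁·tanh(s) + c₂·(s·tanh(s) − 1) + c₃·cos(x)·sech(s) + c₄·sin(x)·sech(s) + c₅·cos(x)·(sinh(s) + s·sech(s)) + c₆·sin(x)·(sinh(s) + s·sech(s)). If u(x,0) = 0 and ∂u/∂s(x,0) = 0 for all x ∈ ℝ, then c₁ = c₂ = c₃ = c₄ = c₅ = c₆ = 0. -/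
/-- A geometric Jacobi field with vanishing signature (vanishing
Cauchy data along the waist `{s = 0}`) is zero: the coefficients all vanish. -/
theorem jacobi_field_signature_injective
    (c₁ c₂ c₃ c₄ c₅ c₆ : ℝ) (u : ℝ → ℝ → ℝ)
    (hu : ∀ x s : ℝ,
      u x s = c₁ * Real.tanh s + c₂ * (s * Real.tanh s - 1)
        + c₃ * Real.cos x * (Real.cosh s)⁻¹
        + c₄ * Real.sin x * (Real.cosh s)⁻¹
        + c₅ * Real.cos x * (Real.sinh s + s * (Real.cosh s)⁻¹)
        + c₆ * Real.sin x * (Real.sinh s + s * (Real.cosh s)⁻¹))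
    (h0 : ∀ x : ℝ, u x 0 = 0)
    (h1 : ∀ x : ℝ, deriv (fun s => u x s) 0 = 0) :
    c₁ = 0 ∧ c₂ = 0 ∧ c₃ = 0 ∧ c₄ = 0 ∧ c₅ = 0 ∧ c₆ = 0 := by
  -- derivative lemmas at 0
  have ht : HasDerivAt Real.tanh 1 0 := by
    have heq : Real.tanh = fun s => Real.sinh s / Real.cosh s :=
      funext fun s => Real.tanh_eq_sinh_div_cosh s
    rw [heq]
    have := (Real.hasDerivAt_sinh 0).div (Real.hasDerivAt_cosh 0) (by simp)
    exact this.congr_deriv (by simp)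
  have hsech : HasDerivAt (fun s : ℝ => (Real.cosh s)⁻¹) 0 0 := by
    have := (Real.hasDerivAt_cosh 0).inv (by simp)
    exact this.congr_deriv (by simp)
  have hst : HasDerivAt (fun s : ℝ => s * Real.tanh s - 1) 0 0 := by
    have := ((hasDerivAt_id (0:ℝ)).mul ht).sub_const 1
    simpa using this
  have hbig : HasDerivAt (fun s : ℝ => Real.sinh s + s * (Real.cosh s)⁻¹) 2 0 := by
    have := (Real.hasDerivAt_sinh 0).add ((hasDerivAt_id (0:ℝ)).mul hsech)
    exact this.congr_deriv (by norm_num)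
  have hder : ∀ x : ℝ, c₁ + 2 * (c₅ * Real.cos x) + 2 * (c₆ * Real.sin x) = 0 := by
    intro x
    have H : HasDerivAt (fun s => u x s)
        (c₁ * 1 + c₂ * 0 + c₃ * Real.cos x * 0 + c₄ * Real.sin x * 0
          + c₅ * Real.cos x * 2 + c₆ * Real.sin x * 2) 0 := by
      have : HasDerivAt (fun s : ℝ =>
          c₁ * Real.tanh s + c₂ * (s * Real.tanh s - 1)
            + c₃ * Real.cos x * (Real.cosh s)⁻¹
            + c₄ * Real.sin x * (Real.cosh s)⁻¹
            + c₅ * Real.cos x * (Real.sinh s + s * (Real.cosh s)⁻¹)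
            + c₆ * Real.sin x * (Real.sinh s + s * (Real.cosh s)⁻¹))
          (c₁ * 1 + c₂ * 0 + c₃ * Real.cos x * 0 + c₄ * Real.sin x * 0
            + c₅ * Real.cos x * 2 + c₆ * Real.sin x * 2) 0 :=
        (((((ht.const_mul c₁).add (hst.const_mul c₂)).add
          (hsech.const_mul (c₃ * Real.cos x))).add
          (hsech.const_mul (c₄ * Real.sin x))).add
          (hbig.const_mul (c₅ * Real.cos x))).add
          (hbig.const_mul (c₆ * Real.sin x))
      exact this.congr_of_eventuallyEq (Filter.Eventually.of_forall fun s => (hu x s))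
    have := H.deriv
    rw [h1 x] at this
    linarith [this]
  have hval : ∀ x : ℝ, -c₂ + c₃ * Real.cos x + c₄ * Real.sin x = 0 := by
    intro x
    have := h0 x
    rw [hu x 0] at this
    simp [Real.tanh_zero, Real.cosh_zero, Real.sinh_zero] at this
    linarith [this]
  have e1 := hval 0
  have e2 := hval Real.pi
  have e3 := hval (Real.pi / 2)
  have d1 := hder 0
  have d2 := hder Real.pi
  have d3 := hder (Real.pi / 2)
  simp [Real.cos_pi, Real.sin_pi, Real.cos_pi_div_two, Real.sin_pi_div_two] at e1 e2 e3 d1 d2 d3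
  refine ⟨?_, ?_, ?_, ?_, ?_, ?_⟩ <;> linarith
end

section
/- Let l > 0 satisfy l·tanh(l) ≠ 1, and let a₊, b₊, c₊, a₋, b₋, c₋ be arbitrary real numbers. Then there exist unique real numbers c₁,…,c₆ such that the function u(x,s) = c₁·tanh(s) + c₂·(s·tanh(s) − 1) + c₃·cos(x)·sech(s) + c₄·sin(x)·sech(s) + c₅·cos(x)·(sinh(s) + s·sech(s)) + c₆·sin(x)·(sinh(s) + s·sech(s)) satisfies u(x, l) = a₊ + b₊·cos(x) + c₊·sin(x) and u(x, −l) = a₋ + b₋·cos(x) + c₋·sin(x) for all x ∈ ℝ. -/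
/-- The geometric Jacobi field on the cylinder with coefficient vector
`c = (c₁, c₂, c₃, c₄, c₅, c₆)`. -/
noncomputable def geomJacobiField (c : ℝ × ℝ × ℝ × ℝ × ℝ × ℝ) (x s : ℝ) : ℝ :=
  c.1 * Real.tanh s + c.2.1 * (s * Real.tanh s - 1)
    + c.2.2.1 * Real.cos x * (Real.cosh s)⁻¹
    + c.2.2.2.1 * Real.sin x * (Real.cosh s)⁻¹
    + c.2.2.2.2.1 * Real.cos x * (Real.sinh s + s * (Real.cosh s)⁻¹)
    + c.2.2.2.2.2 * Real.sin x * (Real.sinh s + s * (Real.cosh s)⁻¹)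

/-- For `l > 0` with `l tanh l ≠ 1`, the trace map is an isomorphism
from the geometric Jacobi fields onto the lower modes on `∂Ω_l`: any prescribed pair
of lower modes on the two boundary circles (coefficients `aPlus, bPlus, cPlus` on
`{s = l}` and `aMinus, bMinus, cMinus` on `{s = −l}`) is the trace of a unique
geometric Jacobi field. -/
theorem jacobi_trace_isomorphism
    (l : ℝ) (hl : 0 < l) (hne : l * Real.tanh l ≠ 1)
    (aPlus bPlus cPlus aMinus bMinus cMinus : ℝ) :
    ∃! c : ℝ × ℝ × ℝ × ℝ × ℝ × ℝ,
      (∀ x : ℝ, geomJacobiField c x l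
        = aPlus + bPlus * Real.cos x + cPlus * Real.sin x) ∧
      (∀ x : ℝ, geomJacobiField c x (-l)
        = aMinus + bMinus * Real.cos x + cMinus * Real.sin x) := by
  set T := Real.tanh l with hTdef
  set S := (Real.cosh l)⁻¹ with hSdef
  set K := Real.sinh l + l * S with hKdef
  have hcosh : 0 < Real.cosh l := Real.cosh_pos l
  have hsinh : 0 < Real.sinh l := Real.sinh_pos_iff.mpr hl
  have hT : T ≠ 0 := by
    rw [hTdef, Real.tanh_eq_sinh_div_cosh]
    positivity
  have hS : S ≠ 0 := by rw [hSdef]; positivity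
  have hK : K ≠ 0 := by rw [hKdef, hSdef]; positivity
  have hD : l * T - 1 ≠ 0 := sub_ne_zero.mpr hne
  refine ⟨((aPlus - aMinus) / (2 * T), (aPlus + aMinus) / (2 * (l * T - 1)),
      (bPlus + bMinus) / (2 * S), (cPlus + cMinus) / (2 * S),
      (bPlus - bMinus) / (2 * K), (cPlus - cMinus) / (2 * K)), ⟨?_, ?_⟩, ?_⟩
  · intro x
    simp only [geomJacobiField, ← hTdef, ← hSdef, ← hKdef]
    field_simp
    ring_nf
    have hD' : -1 + T * l ≠ 0 := by intro h; apply hD; linarith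
    field_simp
    ring
  · intro x
    simp only [geomJacobiField, Real.tanh_neg, Real.cosh_neg, Real.sinh_neg,
      ← hTdef, ← hSdef]
    have : -Real.sinh l + -l * S = -K := by rw [hKdef]; ring
    rw [this]
    field_simp
    ring_nf
    have hD' : -1 + T * l ≠ 0 := by intro h; apply hD; linarith
    field_simp
    ring
  · rintro ⟨d₁, d₂, d₃, d₄, d₅, d₆⟩ ⟨h1, h2⟩
    have e1 := h1 0
    have e2 := h1 Real.pi
    have e3 := h1 (Real.pi / 2)
    have e4 := h2 0
    have e5 := h2 Real.pi
    have e6 := h2 (Real.pi / 2)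
    simp only [geomJacobiField, Real.cos_zero, Real.sin_zero, Real.cos_pi, Real.sin_pi,
      Real.cos_pi_div_two, Real.sin_pi_div_two, Real.tanh_neg, Real.cosh_neg, Real.sinh_neg,
      ← hTdef, ← hSdef, mul_one, mul_zero, zero_mul, one_mul, add_zero, zero_add,
      mul_neg, neg_mul, neg_neg] at e1 e2 e3 e4 e5 e6
    have E1 : d₁ * T + d₂ * (l * T - 1) + d₃ * S + d₅ * K = aPlus + bPlus := by
      rw [hKdef]; linarith
    have E2 : d₁ * T + d₂ * (l * T - 1) - d₃ * S - d₅ * K = aPlus - bPlus := by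
      rw [hKdef]; linarith
    have E3 : d₁ * T + d₂ * (l * T - 1) + d₄ * S + d₆ * K = aPlus + cPlus := by
      rw [hKdef]; linarith
    have E4 : -(d₁ * T) + d₂ * (l * T - 1) + d₃ * S - d₅ * K = aMinus + bMinus := by
      rw [hKdef]; linarith
    have E5 : -(d₁ * T) + d₂ * (l * T - 1) - d₃ * S + d₅ * K = aMinus - bMinus := by
      rw [hKdef]; linarith
    have E6 : -(d₁ * T) + d₂ * (l * T - 1) + d₄ * S - d₆ * K = aMinus + cMinus := by
      rw [hKdef]; linarith
    have hd1 : d₁ * T = (aPlus - aMinus) / 2 := by linarith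
    have hd2 : d₂ * (l * T - 1) = (aPlus + aMinus) / 2 := by linarith
    have hd3 : d₃ * S = (bPlus + bMinus) / 2 := by linarith
    have hd5 : d₅ * K = (bPlus - bMinus) / 2 := by linarith
    have hd4 : d₄ * S = (cPlus + cMinus) / 2 := by linarith
    have hd6 : d₆ * K = (cPlus - cMinus) / 2 := by linarith
    have h2T : (2 : ℝ) * T ≠ 0 := mul_ne_zero two_ne_zero hT
    have h2D : (2 : ℝ) * (l * T - 1) ≠ 0 := mul_ne_zero two_ne_zero hD
    have h2S : (2 : ℝ) * S ≠ 0 := mul_ne_zero two_ne_zero hS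
    have h2K : (2 : ℝ) * K ≠ 0 := mul_ne_zero two_ne_zero hK
    clear e1 e2 e3 e4 e5 e6 E1 E2 E3 E4 E5 E6 h1 h2
    have g1 : d₁ = (aPlus - aMinus) / (2 * T) := by rw [eq_div_iff h2T]; linear_combination 2 * hd1
    have g2 : d₂ = (aPlus + aMinus) / (2 * (l * T - 1)) := by rw [eq_div_iff h2D]; linear_combination 2 * hd2
    have g3 : d₃ = (bPlus + bMinus) / (2 * S) := by rw [eq_div_iff h2S]; linear_combination 2 * hd3
    have g4 : d₄ = (cPlus + cMinus) / (2 * S) := by rw [eq_div_iff h2S]; linear_combination 2 * hd4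
    have g5 : d₅ = (bPlus - bMinus) / (2 * K) := by rw [eq_div_iff h2K]; linear_combination 2 * hd5
    have g6 : d₆ = (cPlus - cMinus) / (2 * K) := by rw [eq_div_iff h2K]; linear_combination 2 * hd6
    simp [Prod.ext_iff, g1, g2, g3, g4, g5, g6]
end

section
/- Let u : ℝ → ℝ be a C² function satisfying u''(s) + 2·sech²(s)·u(s) = u(s) for all s ∈ ℝ. Then there exist unique real numbers a and b such that u(s) = a·sech(s) + b·(sinh(s) + s·sech(s)) for all s. -/
/-!
Write `q = 1 - 2 sech²`, so that the equation reads `u'' = q u`. Since `|q| ≤ 1`, the phase-space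
system `(u, u')' = (u', q u)` is globally Lipschitz, and a solution is determined by `(u 0, u' 0)`.
The profiles `sech` and `sinh + s sech` solve the equation with initial data `(1, 0)` and
`(0, 2)`, so `u = u(0) sech + (u'(0) / 2) (sinh + s sech)`. The coefficients are unique because
the profiles are independent, as their values at `0` and `1` show.
-/

open Real NNReal

theorem lipschitzWith_snd_prodMk_mul_fst {c : ℝ} {K : ℝ≥0} (hc : |c| ≤ K) :
    LipschitzWith (max 1 K) fun p : ℝ × ℝ => (p.2, c * p.1) := by
  have hmul : LipschitzWith K fun x : ℝ => c * x :=
    (lipschitzWith_smul c).weaken (by rw [← NNReal.coe_le_coe]; exact hc)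
  simpa using LipschitzWith.prod_snd.prodMk (hmul.comp LipschitzWith.prod_fst)

theorem ODE_second_order_linear_unique_univ {q : ℝ → ℝ} {K : ℝ≥0} (hq : ∀ t, |q t| ≤ K)
    {f f' g g' : ℝ → ℝ}
    (hf : ∀ t, HasDerivAt f (f' t) t) (hf' : ∀ t, HasDerivAt f' (q t * f t) t)
    (hg : ∀ t, HasDerivAt g (g' t) t) (hg' : ∀ t, HasDerivAt g' (q t * g t) t)
    {t₀ : ℝ} (h₀ : f t₀ = g t₀) (h₀' : f' t₀ = g' t₀) : f = g := by
  have hphase : (fun t => (f t, f' t)) = fun t => (g t, g' t) :=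
    ODE_solution_unique_univ (s := fun _ => Set.univ) (t₀ := t₀)
      (fun t => (lipschitzWith_snd_prodMk_mul_fst (hq t)).lipschitzOnWith)
      (fun t => ⟨(hf t).prodMk (hf' t), trivial⟩) (fun t => ⟨(hg t).prodMk (hg' t), trivial⟩)
      (Prod.ext h₀ h₀')
  funext t
  exact congrArg Prod.fst (congrFun hphase t)

theorem abs_one_sub_two_mul_inv_cosh_sq_le_one (s : ℝ) : |1 - 2 * ((cosh s)⁻¹) ^ 2| ≤ 1 := by
  have h₀ : 0 ≤ ((cosh s)⁻¹) ^ 2 := by positivity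
  have h₁ : ((cosh s)⁻¹) ^ 2 ≤ 1 :=
    pow_le_one₀ (by positivity) (inv_le_one_of_one_le₀ (one_le_cosh s))
  rw [abs_le]
  constructor <;> linarith

theorem hasDerivAt_inv_cosh (s : ℝ) :
    HasDerivAt (fun t => (cosh t)⁻¹) (-sinh s / cosh s ^ 2) s :=
  (hasDerivAt_cosh s).inv (cosh_pos s).ne'

theorem hasDerivAt_neg_sinh_div_cosh_sq (s : ℝ) :
    HasDerivAt (fun t => -sinh t / cosh t ^ 2) ((1 - 2 * ((cosh s)⁻¹) ^ 2) * (cosh s)⁻¹) s := by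
  refine ((hasDerivAt_sinh s).fun_neg.div ((hasDerivAt_cosh s).fun_pow 2)
    (pow_ne_zero 2 (cosh_pos s).ne')).congr_deriv ?_
  field_simp
  linear_combination (-2 * cosh s) * cosh_sq_sub_sinh_sq s

theorem hasDerivAt_sinh_add_mul_inv_cosh (s : ℝ) :
    HasDerivAt (fun t => sinh t + t * (cosh t)⁻¹)
      (cosh s + (cosh s)⁻¹ + s * (-sinh s / cosh s ^ 2)) s :=
  ((hasDerivAt_sinh s).fun_add ((hasDerivAt_id' s).fun_mul (hasDerivAt_inv_cosh s))).congr_deriv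
    (by ring)

theorem hasDerivAt_cosh_add_inv_cosh_add_mul_neg_sinh_div_cosh_sq (s : ℝ) :
    HasDerivAt (fun t => cosh t + (cosh t)⁻¹ + t * (-sinh t / cosh t ^ 2))
      ((1 - 2 * ((cosh s)⁻¹) ^ 2) * (sinh s + s * (cosh s)⁻¹)) s := by
  refine (((hasDerivAt_cosh s).fun_add (hasDerivAt_inv_cosh s)).fun_add
    ((hasDerivAt_id' s).fun_mul (hasDerivAt_neg_sinh_div_cosh_sq s))).congr_deriv ?_
  field_simp
  ring

theorem eq_of_forall_mul_inv_cosh_add_mul_sinh_add_mul_inv_cosh_eq {a b c d : ℝ}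
    (h : ∀ s : ℝ, a * (cosh s)⁻¹ + b * (sinh s + s * (cosh s)⁻¹) =
      c * (cosh s)⁻¹ + d * (sinh s + s * (cosh s)⁻¹)) :
    a = c ∧ b = d := by
  have hac : a = c := by simpa using h 0
  have hpos : 0 < sinh 1 + 1 * (cosh 1)⁻¹ := by positivity
  refine ⟨hac, mul_right_cancel₀ hpos.ne' ?_⟩
  linarith [hac ▸ h 1]

/-- The general solution of the mode one Jacobi equation
`u'' + 2 sech²(s) u = u` on `ℝ` is a unique combination of the profiles
`sech(s)` and `sinh(s) + s sech(s)`. -/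
theorem mode_one_jacobi_general_solution
    (u : ℝ → ℝ) (hreg : ContDiff ℝ 2 u)
    (heq : ∀ s : ℝ,
      deriv (deriv u) s + 2 * ((Real.cosh s)⁻¹) ^ 2 * u s = u s) :
    ∃! p : ℝ × ℝ, ∀ s : ℝ,
      u s = p.1 * (Real.cosh s)⁻¹
        + p.2 * (Real.sinh s + s * (Real.cosh s)⁻¹) := by
  set a := u 0
  set b := deriv u 0 / 2
  have hu (t : ℝ) : HasDerivAt u (deriv u t) t :=
    (hreg.differentiable (by norm_num) t).hasDerivAt
  have hu' (t : ℝ) : HasDerivAt (deriv u) ((1 - 2 * ((cosh t)⁻¹) ^ 2) * u t) t :=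
    (hreg.differentiable_deriv_two t).hasDerivAt.congr_deriv (by linarith [heq t])
  have hw (t : ℝ) : HasDerivAt (fun s => a * (cosh s)⁻¹ + b * (sinh s + s * (cosh s)⁻¹))
      (a * (-sinh t / cosh t ^ 2) + b * (cosh t + (cosh t)⁻¹ + t * (-sinh t / cosh t ^ 2))) t :=
    ((hasDerivAt_inv_cosh t).const_mul a).add ((hasDerivAt_sinh_add_mul_inv_cosh t).const_mul b)
  have hw' (t : ℝ) : HasDerivAt
      (fun s => a * (-sinh s / cosh s ^ 2) + b * (cosh s + (cosh s)⁻¹ + s * (-sinh s / cosh s ^ 2)))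
      ((1 - 2 * ((cosh t)⁻¹) ^ 2) * (a * (cosh t)⁻¹ + b * (sinh t + t * (cosh t)⁻¹))) t :=
    (((hasDerivAt_neg_sinh_div_cosh_sq t).const_mul a).add
      ((hasDerivAt_cosh_add_inv_cosh_add_mul_neg_sinh_div_cosh_sq t).const_mul b)).congr_deriv
        (by ring)
  have hrepr := ODE_second_order_linear_unique_univ (K := 1)
    abs_one_sub_two_mul_inv_cosh_sq_le_one hu hu' hw hw' (t₀ := 0) (by simp [a]) (by simp [b]; ring)
  refine ⟨(a, b), fun s => congrFun hrepr s, ?_⟩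
  rintro ⟨c, d⟩ hcd
  obtain ⟨rfl, rfl⟩ := eq_of_forall_mul_inv_cosh_add_mul_sinh_add_mul_inv_cosh_eq
    fun s => (hcd s).symm.trans (congrFun hrepr s)
  rfl
end

section
/- Let l > 0 satisfy l·tanh(l) ≠ 1, and let u : [−l, l] → ℝ be a C² function satisfying u''(s) + 2·sech²(s)·u(s) = 0 for all s ∈ [−l, l] with u(−l) = u(l) = 0. Then u is identically zero on [−l, l]. -/
private noncomputable def sech2 (s : ℝ) : ℝ := (Real.cosh s)⁻¹ ^ 2
private noncomputable def phi2 (s : ℝ) : ℝ := s * Real.tanh s - 1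
private noncomputable def phi2d (s : ℝ) : ℝ := Real.tanh s + s * sech2 s

private lemma tanh_continuous' : Continuous Real.tanh := by
  have : Real.tanh = fun y => Real.sinh y / Real.cosh y := by
    funext y; exact Real.tanh_eq_sinh_div_cosh y
  rw [this]
  exact Real.continuous_sinh.div Real.continuous_cosh fun x => (Real.cosh_pos x).ne'

private lemma sech2_continuous : Continuous sech2 :=
  (Real.continuous_cosh.inv₀ fun x => (Real.cosh_pos x).ne').pow 2

private lemma hasDerivAt_tanh' (x : ℝ) : HasDerivAt Real.tanh (sech2 x) x := by
  have h := (Real.hasDerivAt_sinh x).div (Real.hasDerivAt_cosh x) (Real.cosh_pos x).ne'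
  have hfun : Real.tanh = fun y => Real.sinh y / Real.cosh y := by
    funext y; exact Real.tanh_eq_sinh_div_cosh y
  rw [hfun]
  refine h.congr_deriv ?_
  symm
  have h1 := Real.cosh_sq_sub_sinh_sq x
  have hc := (Real.cosh_pos x).ne'
  unfold sech2
  field_simp
  linarith

private lemma hasDerivAt_sech2 (x : ℝ) :
    HasDerivAt sech2 (-2 * sech2 x * Real.tanh x) x := by
  have h := ((Real.hasDerivAt_cosh x).inv (Real.cosh_pos x).ne').pow 2
  have hfun : sech2 = fun s => ((Real.cosh s)⁻¹) ^ 2 := rfl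
  rw [hfun]
  refine h.congr_deriv ?_
  symm
  have hc := (Real.cosh_pos x).ne'
  beta_reduce
  rw [Real.tanh_eq_sinh_div_cosh]
  field_simp
  try exact Or.inl trivial
  try exact Or.inl (by ring)
  simp only [Nat.cast_ofNat, Nat.add_one_sub_one, pow_one, Pi.inv_apply]
  field_simp

private lemma hasDerivAt_phi2 (x : ℝ) : HasDerivAt phi2 (phi2d x) x := by
  have h := ((hasDerivAt_id x).mul (hasDerivAt_tanh' x)).sub_const 1
  have hfun : phi2 = fun s => s * Real.tanh s - 1 := rfl
  rw [hfun]
  refine h.congr_deriv ?_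
  symm
  unfold phi2d
  simp [mul_comm]

private lemma hasDerivAt_phi2d (x : ℝ) :
    HasDerivAt phi2d (-2 * sech2 x * phi2 x) x := by
  have h := (hasDerivAt_tanh' x).add ((hasDerivAt_id x).mul (hasDerivAt_sech2 x))
  have hfun : phi2d = fun s => Real.tanh s + s * sech2 s := rfl
  rw [hfun]
  refine h.congr_deriv ?_
  symm
  unfold phi2 sech2
  simp only [id_eq]
  ring

private lemma wronskian_eq_one (x : ℝ) :
    Real.tanh x * phi2d x - sech2 x * phi2 x = 1 := by
  unfold phi2d phi2 sech2
  rw [Real.tanh_eq_sinh_div_cosh]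
  have hc := (Real.cosh_pos x).ne'
  have h1 := Real.cosh_sq_sub_sinh_sq x
  field_simp
  linear_combination (-Real.cosh x) * h1

/-- The mode zero case of the non-degeneracy lemma: for `l > 0`
with `l tanh l ≠ 1`, the Dirichlet problem for `u'' + 2 sech²(s) u = 0` on `[−l, l]`
has only the trivial solution. -/
theorem mode_zero_dirichlet_nondegeneracy
    (l : ℝ) (hl : 0 < l) (hne : l * Real.tanh l ≠ 1) (u : ℝ → ℝ)
    (hreg : ContDiffOn ℝ 2 u (Set.Icc (-l) l))
    (heq : ∀ s ∈ Set.Icc (-l) l,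
      iteratedDerivWithin 2 u (Set.Icc (-l) l) s
        + 2 * ((Real.cosh s)⁻¹) ^ 2 * u s = 0)
    (hbc₁ : u (-l) = 0) (hbc₂ : u l = 0) :
    ∀ s ∈ Set.Icc (-l) l, u s = 0 := by
  have hll : (-l) < l := by linarith
  set S := Set.Icc (-l) l with hSdef
  have hS : UniqueDiffOn ℝ S := uniqueDiffOn_Icc hll
  set v : ℝ → ℝ := derivWithin u S with hvdef
  have hudiff : DifferentiableOn ℝ u S := hreg.differentiableOn (by norm_num)
  have hvreg : ContDiffOn ℝ 1 v S := hreg.derivWithin hS (by norm_num)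
  have hvdiff : DifferentiableOn ℝ v S := hvreg.differentiableOn (by norm_num)
  set w : ℝ → ℝ := derivWithin v S with hwdef
  have hw_eq : ∀ x ∈ S, w x = -(2 * sech2 x * u x) := by
    intro x hx
    have h2 : iteratedDerivWithin 2 u S x = w x := by
      rw [show (2 : ℕ) = 1 + 1 from rfl, iteratedDerivWithin_succ, hwdef, hvdef]
      exact derivWithin_congr (fun y hy => congrFun iteratedDerivWithin_one y)
        (congrFun iteratedDerivWithin_one x)
    have h3 := heq x hx
    rw [h2] at h3
    unfold sech2
    linarith
  have hu' : ∀ x ∈ S, HasDerivWithinAt u (v x) S x :=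
    fun x hx => (hudiff x hx).hasDerivWithinAt
  have hv' : ∀ x ∈ S, HasDerivWithinAt v (w x) S x :=
    fun x hx => (hvdiff x hx).hasDerivWithinAt
  set W1 : ℝ → ℝ := fun s => v s * Real.tanh s - u s * sech2 s with hW1
  set W2 : ℝ → ℝ := fun s => v s * phi2 s - u s * phi2d s with hW2
  have hW1' : ∀ x ∈ S, HasDerivWithinAt W1 0 S x := by
    intro x hx
    have h := ((hv' x hx).mul (hasDerivAt_tanh' x).hasDerivWithinAt).sub
      ((hu' x hx).mul (hasDerivAt_sech2 x).hasDerivWithinAt)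
    refine h.congr_deriv ?_
    symm
    rw [hw_eq x hx]
    ring
  have hW2' : ∀ x ∈ S, HasDerivWithinAt W2 0 S x := by
    intro x hx
    have h := ((hv' x hx).mul (hasDerivAt_phi2 x).hasDerivWithinAt).sub
      ((hu' x hx).mul (hasDerivAt_phi2d x).hasDerivWithinAt)
    refine h.congr_deriv ?_
    symm
    rw [hw_eq x hx]
    have hwr : phi2d x = Real.tanh x + x * sech2 x := rfl
    ring
  have hcont1 : ContinuousOn W1 S :=
    (hvreg.continuousOn.mul tanh_continuous'.continuousOn).sub
      (hudiff.continuousOn.mul sech2_continuous.continuousOn)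
  have hcont2 : ContinuousOn W2 S := by
    have hphi2c : Continuous phi2 := (continuous_id.mul tanh_continuous').sub continuous_const
    have hphi2dc : Continuous phi2d := tanh_continuous'.add (continuous_id.mul sech2_continuous)
    exact (hvreg.continuousOn.mul hphi2c.continuousOn).sub
      (hudiff.continuousOn.mul hphi2dc.continuousOn)
  have hconst : ∀ W : ℝ → ℝ, ContinuousOn W S → (∀ x ∈ S, HasDerivWithinAt W 0 S x) →
      ∀ x ∈ S, W x = W (-l) := by
    intro W hWc hWd
    apply constant_of_has_deriv_right_zero hWc
    intro x hx
    exact (hWd x ⟨hx.1, le_of_lt hx.2⟩).mono_of_mem_nhdsWithin (Icc_mem_nhdsGE_of_mem hx)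
  set c1 := W1 (-l) with hc1
  set c2 := W2 (-l) with hc2
  have hW1c : ∀ x ∈ S, W1 x = c1 := hconst W1 hcont1 hW1'
  have hW2c : ∀ x ∈ S, W2 x = c2 := hconst W2 hcont2 hW2'
  have hid : ∀ x ∈ S, u x = c1 * phi2 x - c2 * Real.tanh x := by
    intro x hx
    have h1 := hW1c x hx
    have h2 := hW2c x hx
    have hwr := wronskian_eq_one x
    have key : c1 * phi2 x - c2 * Real.tanh x
        = u x * (Real.tanh x * phi2d x - sech2 x * phi2 x) := by
      rw [← h1, ← h2]; simp only [hW1, hW2]; ring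
    rw [key, hwr, mul_one]
  have hmem_l : l ∈ S := by constructor <;> linarith
  have hmem_ml : (-l) ∈ S := by constructor <;> linarith
  have hbl := hid l hmem_l
  have hbml := hid (-l) hmem_ml
  rw [hbc₂] at hbl
  rw [hbc₁] at hbml
  have hφ2even : phi2 (-l) = phi2 l := by unfold phi2; rw [Real.tanh_neg]; ring
  have hφ1odd : Real.tanh (-l) = -Real.tanh l := Real.tanh_neg l
  rw [hφ2even, hφ1odd] at hbml
  have htanhpos : 0 < Real.tanh l := by
    rw [Real.tanh_eq_sinh_div_cosh]
    exact div_pos (by rwa [Real.sinh_pos_iff]) (Real.cosh_pos l)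
  have hc2z : c2 = 0 := by
    have h : c2 * Real.tanh l = 0 := by linarith
    exact (mul_eq_zero.mp h).resolve_right (ne_of_gt htanhpos)
  have hc1z : c1 = 0 := by
    have hφ2ne : phi2 l ≠ 0 := by
      unfold phi2
      intro h
      exact hne (by linarith)
    rw [hc2z] at hbl
    have h : c1 * phi2 l = 0 := by linarith
    exact (mul_eq_zero.mp h).resolve_right hφ2ne
  intro s hs
  rw [hid s hs, hc1z, hc2z]
  ring
end

section
/- Let l > 0 and let u : [−l, l] → ℝ be a C² function satisfying u''(s) + 2·sech²(s)·u(s) = u(s) for all s ∈ [−l, l] with u(−l) = u(l) = 0. Then u is identically zero on [−l, l]. -/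
/-- The mode one case of the non-degeneracy lemma: for every
`l > 0`, the Dirichlet problem for `u'' + 2 sech²(s) u = u` on `[−l, l]` has only
the trivial solution. -/
theorem mode_one_dirichlet_nondegeneracy
    (l : ℝ) (hl : 0 < l) (u : ℝ → ℝ)
    (hreg : ContDiffOn ℝ 2 u (Set.Icc (-l) l))
    (heq : ∀ s ∈ Set.Icc (-l) l,
      iteratedDerivWithin 2 u (Set.Icc (-l) l) s
        + 2 * ((Real.cosh s)⁻¹) ^ 2 * u s = u s)
    (hbc₁ : u (-l) = 0) (hbc₂ : u l = 0) :
    ∀ s ∈ Set.Icc (-l) l, u s = 0 := by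
  have hll : (-l : ℝ) < l := by linarith
  have hcosh : ∀ s : ℝ, Real.cosh s ≠ 0 := fun s => (Real.cosh_pos s).ne'
  set I := Set.Icc (-l) l with hIdef
  have hI : UniqueDiffOn ℝ I := uniqueDiffOn_Icc hll
  set u' : ℝ → ℝ := derivWithin u I with hu'def
  have hudiff : DifferentiableOn ℝ u I := hreg.differentiableOn (by norm_num)
  have hu' : ∀ s ∈ I, HasDerivWithinAt u (u' s) I s :=
    fun s hs => (hudiff s hs).hasDerivWithinAt
  have hu'cd : ContDiffOn ℝ 1 u' I := hreg.derivWithin hI (by norm_num)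
  have hu'diff : DifferentiableOn ℝ u' I := hu'cd.differentiableOn one_ne_zero
  -- the second derivative from the equation
  have hu'' : ∀ s ∈ I, HasDerivWithinAt u' (u s - 2 * ((Real.cosh s)⁻¹) ^ 2 * u s) I s := by
    intro s hs
    have h1 : iteratedDerivWithin 2 u I s = derivWithin u' I s := by
      rw [show (2 : ℕ) = 1 + 1 from rfl, iteratedDerivWithin_succ',
        iteratedDerivWithin_one]
    have h2 : derivWithin u' I s = u s - 2 * ((Real.cosh s)⁻¹) ^ 2 * u s := by
      have := heq s hs
      rw [h1] at this
      linarith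
    exact h2 ▸ (hu'diff s hs).hasDerivWithinAt
  -- conversion for the constancy lemma
  have toIci : ∀ {f : ℝ → ℝ}, (∀ s ∈ I, HasDerivWithinAt f 0 I s) →
      ∀ x ∈ Set.Ico (-l) l, HasDerivWithinAt f 0 (Set.Ici x) x := by
    intro f hf x hx
    have h1 := (hf x ⟨hx.1, hx.2.le⟩).mono (Set.Icc_subset_Icc hx.1 le_rfl)
    rw [show Set.Icc x l = Set.Ici x ∩ Set.Iic l from (Set.Ici_inter_Iic).symm] at h1
    exact (hasDerivWithinAt_inter (Iic_mem_nhds hx.2)).mp h1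
  -- the Wronskian with sech
  set W : ℝ → ℝ := fun s =>
    u' s * (Real.cosh s)⁻¹ + u s * Real.sinh s * ((Real.cosh s)⁻¹) ^ 2 with hWdef
  have hW : ∀ s ∈ I, HasDerivWithinAt W 0 I s := by
    intro s hs
    have h1 := (hu'' s hs).mul ((Real.hasDerivAt_cosh s).inv (hcosh s)).hasDerivWithinAt
    have h2 := ((hu' s hs).mul (Real.hasDerivAt_sinh s).hasDerivWithinAt).mul
      (((Real.hasDerivAt_cosh s).inv (hcosh s)).pow 2).hasDerivWithinAt
    have h3 := h1.add h2
    refine h3.congr_deriv (Eq.symm ?_)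
    have hs2 : Real.sinh s ^ 2 = Real.cosh s ^ 2 - 1 := Real.sinh_sq s
    simp only [Pi.inv_apply, Pi.pow_apply, Pi.mul_apply, Nat.cast_ofNat, Nat.reduceSub, pow_one]
    field_simp
    linear_combination (2 * u s) * hs2
  have hWcont : ContinuousOn W I := by
    have hci : ContinuousOn (fun s : ℝ => (Real.cosh s)⁻¹) I :=
      Real.continuous_cosh.continuousOn.inv₀ fun x _ => hcosh x
    exact (hu'cd.continuousOn.mul hci).add
      ((hreg.continuousOn.mul Real.continuous_sinh.continuousOn).mul (hci.pow 2))
  have hWc : ∀ x ∈ I, W x = W (-l) :=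
    constant_of_has_deriv_right_zero hWcont (fun x hx => toIci hW x hx)
  -- v = u * cosh
  set v : ℝ → ℝ := fun s => u s * Real.cosh s with hvdef
  have hv' : ∀ s ∈ I, HasDerivWithinAt v (Real.cosh s ^ 2 * W (-l)) I s := by
    intro s hs
    have h1 := (hu' s hs).mul (Real.hasDerivAt_cosh s).hasDerivWithinAt
    refine h1.congr_deriv (Eq.symm ?_)
    rw [← hWc s hs, hWdef]
    field_simp
  -- Rolle gives W (-l) = 0
  have hW0 : W (-l) = 0 := by
    have hvcont : ContinuousOn v I :=
      hreg.continuousOn.mul Real.continuous_cosh.continuousOn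
    have hvI : v (-l) = v l := by simp [hvdef, hbc₁, hbc₂]
    obtain ⟨c, hc, hc0⟩ := exists_hasDerivAt_eq_zero hll hvcont hvI
      (fun x hx => (hv' x (Set.Ioo_subset_Icc_self hx)).hasDerivAt
        (Icc_mem_nhds hx.1 hx.2))
    have := hcosh c
    have h2 : Real.cosh c ^ 2 ≠ 0 := pow_ne_zero 2 this
    exact (mul_eq_zero.mp hc0).resolve_left h2
  -- hence v is constant, equal to 0
  have hv0 : ∀ s ∈ I, HasDerivWithinAt v 0 I s := by
    intro s hs
    have := hv' s hs
    rwa [hW0, mul_zero] at this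
  have hvc : ∀ x ∈ I, v x = v (-l) :=
    constant_of_has_deriv_right_zero
      (hreg.continuousOn.mul Real.continuous_cosh.continuousOn)
      (fun x hx => toIci hv0 x hx)
  intro s hs
  have h := hvc s hs
  simp only [hvdef, hbc₁, zero_mul] at h
  exact (mul_eq_zero.mp h).resolve_right (hcosh s)
end
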